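/- arXiv:2410.08846 — 7 statements merged into one kernel-verified Lean document; each statement's English description precedes it below -/
import Mathlib

section
/- Let g, h be smooth compactly supported functions on ℝ^d × ℝ^d. Then ∫ g · L_H h dμ = ∫ h · (−v·∇_x g + ∇U₀·∇_v g) dμ + ∫ g h (v·∇U₁) dμ, where L_H h(x,v) = v·∇_x h(x,v) − ∇U₀(x)·∇_v h(x,v). -/
open MeasureTheory ProbabilityTheory Real

noncomputable section

/-- Phase space `ℝ^d × ℝ^d` (positions and velocities). -/
abbrev Phase (d : ℕ) := (Fin d → ℝ) × (Fin d → ℝ)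

/-- Partial derivative in the position variable `x_i`. -/
def pdx {d : ℕ} (i : Fin d) (f : Phase d → ℝ) (p : Phase d) : ℝ :=
  fderiv ℝ f p (Pi.single i 1, 0)

/-- Partial derivative in the velocity variable `v_i`. -/
def pdv {d : ℕ} (i : Fin d) (f : Phase d → ℝ) (p : Phase d) : ℝ :=
  fderiv ℝ f p (0, Pi.single i 1)

/-- Partial derivative `∂_i U` of a function of the position only. -/
def pd {d : ℕ} (i : Fin d) (U : (Fin d → ℝ) → ℝ) (x : Fin d → ℝ) : ℝ :=
  fderiv ℝ U x (Pi.single i 1)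

/-- Hamiltonian part: `L_H f = v·∇_x f − ∇U₀·∇_v f`. -/
def LH {d : ℕ} (U₀ : (Fin d → ℝ) → ℝ) (f : Phase d → ℝ) (p : Phase d) : ℝ :=
  (∑ i, p.2 i * pdx i f p) - ∑ i, pd i U₀ p.1 * pdv i f p

/-- Ornstein–Uhlenbeck part: `L_D f = −γ v·∇_v f + γ Δ_v f`. -/
def LD {d : ℕ} (γ : ℝ) (f : Phase d → ℝ) (p : Phase d) : ℝ :=
  -γ * (∑ i, p.2 i * pdv i f p) + γ * ∑ i, pdv i (pdv i f) p

/-- Post-jump velocity `Vⁱ`: coordinate `i` is replaced by `ρ v_i + √(1−ρ²) ξ`. -/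
def jumpV {d : ℕ} (ρ : ℝ) (v : Fin d → ℝ) (i : Fin d) (ξ : ℝ) : Fin d → ℝ :=
  Function.update v i (ρ * v i + Real.sqrt (1 - ρ ^ 2) * ξ)

/-- Jump part of the generator:
`L_J f(x,v) = (2/(1−ρ)) Σᵢ E[(f(x,Vⁱ) − f(x,v)) Ψ((∂ᵢU₁(x)/2)(vᵢ − Vⁱᵢ))]`. -/
def LJ {d : ℕ} (ρ : ℝ) (Ψ : ℝ → ℝ) (U₁ : (Fin d → ℝ) → ℝ) (f : Phase d → ℝ) (p : Phase d) : ℝ :=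
  (2 / (1 - ρ)) * ∑ i, ∫ ξ, (f (p.1, jumpV ρ p.2 i ξ) - f p)
      * Ψ (pd i U₁ p.1 / 2 * (p.2 i - (ρ * p.2 i + Real.sqrt (1 - ρ ^ 2) * ξ)))
      ∂(gaussianReal 0 1)

/-- Gibbs measure on phase space, with density `Z⁻¹ exp(−U(x) − |v|²/2)`. -/
def gibbs (d : ℕ) (U : (Fin d → ℝ) → ℝ) (Z : ℝ) : Measure (Phase d) :=
  (volume : Measure (Phase d)).withDensity fun p =>
    ENNReal.ofReal (Z⁻¹ * Real.exp (-U p.1 - (∑ i, p.2 i ^ 2) / 2))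

/-!
Write `H(x, v) = U(x) + |v|² / 2`, so that `μ` is a multiple of `e^{-H} dx dv`. If `c` is a weight
that is constant in the direction `w`, then integrating `∂_w (c f g e^{-H}) = 0` gives
`∫ c (f ∂_w g + ∂_w f g) dμ = ∫ c f g ∂_w H dμ` for compactly supported `f`.
Now `L_H = b · ∇` with `b = (v, -∇U₀(x))`, a sum of the directions `e_{x_i}` weighted by `v_i` and
`e_{v_i}` weighted by `-∂ᵢU₀(x)`, each weight constant along its own direction. Summing gives
`∫ (g L_H h + h L_H g) dμ = ∫ g h (b · ∇H) dμ`, and `b · ∇H = v · ∇U₁` because the `U₀` terms cancel.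
-/

section WeightedIntegrationByParts

variable {E : Type*} [NormedAddCommGroup E] [NormedSpace ℝ E] [FiniteDimensional ℝ E]
  [MeasurableSpace E] [BorelSpace E] {μ : Measure E} [μ.IsAddHaarMeasure]

theorem integral_fderiv_eq_zero_of_hasCompactSupport {B : E → ℝ} (hB : ContDiff ℝ 1 B)
    (hBs : HasCompactSupport B) (w : E) : ∫ x, fderiv ℝ B x w ∂μ = 0 := by
  have hB' : Continuous fun x => fderiv ℝ B x w :=
    (hB.continuous_fderiv one_ne_zero).clm_apply continuous_const
  simpa using integral_mul_fderiv_eq_neg_fderiv_mul_of_integrable (μ := μ)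
    (f := fun _ => (1 : ℝ)) (g := B) (v := w) (by simp)
    (by simpa using hB'.integrable_of_hasCompactSupport (hBs.fderiv_apply ℝ w))
    (by simpa using hB.continuous.integrable_of_hasCompactSupport hBs)
    (fun _ _ => differentiableAt_const _) (fun x _ => hB.differentiable one_ne_zero x)

theorem integral_fderiv_sub_mul_fderiv_withDensity_exp_neg_eq_zero {H A : E → ℝ}
    (hH : ContDiff ℝ 1 H) (hA : ContDiff ℝ 1 A) (hAs : HasCompactSupport A) (w : E) :
    ∫ x, (fderiv ℝ A x w - A x * fderiv ℝ H x w)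
      ∂μ.withDensity (fun x => ENNReal.ofReal (exp (-H x))) = 0 := by
  rw [integral_withDensity_eq_integral_toReal_smul (by have := hH.continuous.measurable; fun_prop)
    (ae_of_all _ fun _ => ENNReal.ofReal_lt_top)]
  have hAE : ContDiff ℝ 1 fun x => A x * exp (-H x) := hA.mul (hH.neg.exp)
  rw [← integral_fderiv_eq_zero_of_hasCompactSupport (μ := μ) hAE hAs.mul_right w]
  congr 1 with x
  have hD := (hA.differentiable one_ne_zero x).hasFDerivAt.fun_mul
    (hH.differentiable one_ne_zero x).hasFDerivAt.fun_neg.exp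
  rw [hD.fderiv, ENNReal.toReal_ofReal (exp_pos _).le]
  simp only [smul_eq_mul, add_apply, smul_apply, neg_apply]
  ring

theorem integral_mul_fderiv_mul_withDensity_exp_neg_eq_zero {H c f g : E → ℝ} {w : E}
    (hH : ContDiff ℝ 1 H) (hc : ContDiff ℝ 1 c) (hcw : ∀ x, fderiv ℝ c x w = 0)
    (hf : ContDiff ℝ 1 f) (hfs : HasCompactSupport f) (hg : ContDiff ℝ 1 g) :
    ∫ x, c x * (f x * fderiv ℝ g x w + fderiv ℝ f x w * g x - f x * g x * fderiv ℝ H x w)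
      ∂μ.withDensity (fun x => ENNReal.ofReal (exp (-H x))) = 0 := by
  have hcfg : ContDiff ℝ 1 fun x => c x * (f x * g x) := hc.mul (hf.mul hg)
  rw [← integral_fderiv_sub_mul_fderiv_withDensity_exp_neg_eq_zero (μ := μ) hH hcfg
    hfs.mul_right.mul_left w]
  congr 1 with x
  have hD := (hc.differentiable one_ne_zero x).hasFDerivAt.fun_mul
    ((hf.differentiable one_ne_zero x).hasFDerivAt.fun_mul
      (hg.differentiable one_ne_zero x).hasFDerivAt)
  rw [hD.fderiv]
  simp only [add_apply, smul_apply, smul_eq_mul, hcw x]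
  ring

theorem integrable_mul_fderiv_mul_withDensity_exp_neg {H c f g : E → ℝ} (w : E)
    (hH : ContDiff ℝ 1 H) (hc : Continuous c) (hf : ContDiff ℝ 1 f) (hfs : HasCompactSupport f)
    (hg : ContDiff ℝ 1 g) :
    Integrable (fun x => c x * (f x * fderiv ℝ g x w + fderiv ℝ f x w * g x
      - f x * g x * fderiv ℝ H x w)) (μ.withDensity (fun x => ENNReal.ofReal (exp (-H x)))) := by
  have := IsLocallyFiniteMeasure.withDensity_ofReal (μ := μ) (hH.continuous.neg.rexp)
  have hD : ∀ {k : E → ℝ}, ContDiff ℝ 1 k → Continuous fun x => fderiv ℝ k x w :=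
    fun hk => (hk.continuous_fderiv one_ne_zero).clm_apply continuous_const
  refine Continuous.integrable_of_hasCompactSupport ?_ ?_
  · have := hf.continuous; have := hg.continuous; have := hD hf; have := hD hg; have := hD hH
    fun_prop
  · exact ((hfs.mul_right.add (hfs.fderiv_apply ℝ w).mul_right).sub
      hfs.mul_right.mul_right).mul_left

end WeightedIntegrationByParts

section ProductCoordinates

variable {𝕜 E F G : Type*} [NontriviallyNormedField 𝕜] [NormedAddCommGroup E] [NormedSpace 𝕜 E]
  [NormedAddCommGroup F] [NormedSpace 𝕜 F] [NormedAddCommGroup G] [NormedSpace 𝕜 G]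

theorem fderiv_comp_fst_apply {φ : E → G} {p : E × F} (hφ : DifferentiableAt 𝕜 φ p.1)
    (a : E) (b : F) : fderiv 𝕜 (fun q : E × F => φ q.1) p (a, b) = fderiv 𝕜 φ p.1 a := by
  show fderiv 𝕜 (φ ∘ Prod.fst) p (a, b) = _
  rw [(hφ.hasFDerivAt.comp p hasFDerivAt_fst).fderiv]
  rfl

theorem fderiv_comp_snd_apply {φ : F → G} {p : E × F} (hφ : DifferentiableAt 𝕜 φ p.2)
    (a : E) (b : F) : fderiv 𝕜 (fun q : E × F => φ q.2) p (a, b) = fderiv 𝕜 φ p.2 b := by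
  show fderiv 𝕜 (φ ∘ Prod.snd) p (a, b) = _
  rw [(hφ.hasFDerivAt.comp p hasFDerivAt_snd).fderiv]
  rfl

end ProductCoordinates

theorem fderiv_sum_sq_div_two_apply {d : ℕ} (v b : Fin d → ℝ) :
    fderiv ℝ (fun v : Fin d → ℝ => (∑ i, v i ^ 2) / 2) v b = ∑ i, v i * b i := by
  have hS : HasFDerivAt (fun y : Fin d → ℝ => ∑ i, y i ^ 2) _ v :=
    HasFDerivAt.fun_sum fun i _ => (hasFDerivAt_apply (𝕜 := ℝ) i v).pow 2
  simp only [div_eq_mul_inv]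
  rw [(hS.mul_const 2⁻¹).fderiv]
  simp [Finset.mul_sum, mul_assoc]

instance {d : ℕ} : (volume : Measure (Phase d)).IsAddHaarMeasure :=
  Measure.prod.instIsAddHaarMeasure _ _

def energy {d : ℕ} (U : (Fin d → ℝ) → ℝ) (p : Phase d) : ℝ :=
  U p.1 + (∑ i, p.2 i ^ 2) / 2

section PhaseSpace

variable {d : ℕ} {U U₀ U₁ : (Fin d → ℝ) → ℝ} {f g h : Phase d → ℝ}

theorem gibbs_eq_smul_withDensity (Z : ℝ) :
    gibbs d U Z = ENNReal.ofReal Z⁻¹ •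
      (volume : Measure (Phase d)).withDensity fun p => ENNReal.ofReal (exp (-energy U p)) := by
  rw [gibbs, ← withDensity_smul' _ _ ENNReal.ofReal_ne_top]
  congr 1 with p
  rw [Pi.smul_apply, smul_eq_mul, ← ENNReal.ofReal_mul' (exp_pos _).le, energy, neg_add,
    sub_eq_add_neg]

theorem contDiff_energy {n : WithTop ℕ∞} (hU : ContDiff ℝ n U) :
    ContDiff ℝ n (energy U) := by
  unfold energy
  fun_prop

theorem fderiv_energy_apply (hU : Differentiable ℝ U) (p : Phase d) (a b : Fin d → ℝ) :
    fderiv ℝ (energy U) p (a, b) = fderiv ℝ U p.1 a + ∑ i, p.2 i * b i := by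
  have hS : Differentiable ℝ fun v : Fin d → ℝ => (∑ i, v i ^ 2) / 2 := by fun_prop
  unfold energy
  rw [fderiv_fun_add (by fun_prop) (by fun_prop), add_apply, fderiv_comp_fst_apply (hU _),
    fderiv_comp_snd_apply (hS _), fderiv_sum_sq_div_two_apply]

theorem pdx_energy (hU : Differentiable ℝ U) (i : Fin d) (p : Phase d) :
    pdx i (energy U) p = pd i U p.1 := by
  simp [pdx, fderiv_energy_apply hU, pd]

theorem pdv_energy (hU : Differentiable ℝ U) (i : Fin d) (p : Phase d) :
    pdv i (energy U) p = p.2 i := by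
  simp [pdv, fderiv_energy_apply hU, Pi.single_apply]

theorem pdx_comp_snd {F : (Fin d → ℝ) → ℝ} {p : Phase d} (hF : DifferentiableAt ℝ F p.2)
    (i : Fin d) : pdx i (fun q => F q.2) p = 0 :=
  (fderiv_comp_snd_apply hF _ _).trans (map_zero _)

theorem pdv_comp_fst {F : (Fin d → ℝ) → ℝ} {p : Phase d} (hF : DifferentiableAt ℝ F p.1)
    (i : Fin d) : pdv i (fun q => F q.1) p = 0 :=
  (fderiv_comp_fst_apply hF _ _).trans (map_zero _)

theorem continuous_pdx (hf : ContDiff ℝ 1 f) (i : Fin d) :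
    Continuous (pdx i f) :=
  (hf.continuous_fderiv one_ne_zero).clm_apply continuous_const

theorem continuous_pdv (hf : ContDiff ℝ 1 f) (i : Fin d) :
    Continuous (pdv i f) :=
  (hf.continuous_fderiv one_ne_zero).clm_apply continuous_const

theorem contDiff_pd {n : WithTop ℕ∞} (hU : ContDiff ℝ (n + 1) U)
    (i : Fin d) : ContDiff ℝ n (pd i U) :=
  (hU.fderiv_right le_rfl).clm_apply contDiff_const

theorem pd_add {x : Fin d → ℝ} (hU₀ : DifferentiableAt ℝ U₀ x)
    (hU₁ : DifferentiableAt ℝ U₁ x) (i : Fin d) :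
    pd i (fun x => U₀ x + U₁ x) x = pd i U₀ x + pd i U₁ x := by
  rw [pd, fderiv_fun_add hU₀ hU₁, add_apply, pd, pd]

theorem continuous_LH (hU₀ : ContDiff ℝ 1 U₀)
    (hf : ContDiff ℝ 1 f) : Continuous (LH U₀ f) := by
  have := continuous_pdx hf; have := continuous_pdv hf
  have := fun i => (contDiff_pd (n := 0) (by simpa using hU₀) i).continuous
  unfold LH
  fun_prop

theorem integrable_mul_LH {μ : Measure (Phase d)} [IsFiniteMeasureOnCompacts μ]
    (hU₀ : ContDiff ℝ 1 U₀) (hg : Continuous g)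
    (hgs : HasCompactSupport g) (hh : ContDiff ℝ 1 h) :
    Integrable (fun p => g p * LH U₀ h p) μ :=
  (hg.mul (continuous_LH hU₀ hh)).integrable_of_hasCompactSupport hgs.mul_right

theorem mul_LH_add_mul_LH_sub_eq_sum_sub_sum (hU₀ : Differentiable ℝ U₀)
    (hU₁ : Differentiable ℝ U₁) (p : Phase d) :
    g p * LH U₀ h p + h p * LH U₀ g p - g p * h p * (∑ i, p.2 i * pd i U₁ p.1)
      = ∑ i, p.2 i * (g p * pdx i h p + pdx i g p * h p
          - g p * h p * pdx i (energy fun x => U₀ x + U₁ x) p)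
        - ∑ i, pd i U₀ p.1 * (g p * pdv i h p + pdv i g p * h p
          - g p * h p * pdv i (energy fun x => U₀ x + U₁ x) p) := by
  have hU : Differentiable ℝ fun x => U₀ x + U₁ x := hU₀.add hU₁
  simp only [LH, pdx_energy hU, pdv_energy hU, pd_add (hU₀ p.1) (hU₁ p.1), mul_sub,
    Finset.mul_sum, ← Finset.sum_sub_distrib, ← Finset.sum_add_distrib]
  exact Finset.sum_congr rfl fun i _ => by ring

theorem integral_mul_LH_withDensity_exp_neg_energy (hU₀ : ContDiff ℝ 2 U₀)
    (hU₁ : ContDiff ℝ 1 U₁) (hg : ContDiff ℝ 1 g) (hgs : HasCompactSupport g) (hh : ContDiff ℝ 1 h)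
    (hhs : HasCompactSupport h) :
    let ν := (volume : Measure (Phase d)).withDensity
      fun p => ENNReal.ofReal (exp (-energy (fun x => U₀ x + U₁ x) p))
    ∫ p, g p * LH U₀ h p ∂ν
      = -(∫ p, h p * LH U₀ g p ∂ν) + ∫ p, g p * h p * (∑ i, p.2 i * pd i U₁ p.1) ∂ν := by
  intro ν
  have hU₀' : ContDiff ℝ 1 U₀ := hU₀.of_le (by norm_num)
  have hH : ContDiff ℝ 1 (energy fun x => U₀ x + U₁ x) := contDiff_energy (hU₀'.add hU₁)
  have hν : IsLocallyFiniteMeasure ν :=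
    IsLocallyFiniteMeasure.withDensity_ofReal hH.continuous.neg.rexp
  have hv (i : Fin d) : ContDiff ℝ 1 fun p : Phase d => p.2 i := by fun_prop
  have hpd₀ (i : Fin d) : ContDiff ℝ 1 fun p : Phase d => pd i U₀ p.1 :=
    (contDiff_pd hU₀ i).comp contDiff_fst
  have hgLH := integrable_mul_LH (μ := ν) hU₀' hg.continuous hgs hh
  have hhLH := integrable_mul_LH (μ := ν) hU₀' hh.continuous hhs hg
  have hghU₁ : Integrable (fun p => g p * h p * (∑ i, p.2 i * pd i U₁ p.1)) ν := by
    have hpd₁ (i : Fin d) : Continuous (pd i U₁) :=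
      (contDiff_pd (n := 0) (by simpa using hU₁) i).continuous
    have := hg.continuous; have := hh.continuous
    exact Continuous.integrable_of_hasCompactSupport (by fun_prop) hgs.mul_right.mul_right
  set X : Fin d → Phase d → ℝ := fun i p => p.2 i * (g p * pdx i h p + pdx i g p * h p
    - g p * h p * pdx i (energy fun x => U₀ x + U₁ x) p)
  set V : Fin d → Phase d → ℝ := fun i p => pd i U₀ p.1 * (g p * pdv i h p + pdv i g p * h p
    - g p * h p * pdv i (energy fun x => U₀ x + U₁ x) p)
  have hX (i : Fin d) : Integrable (X i) ν ∧ ∫ p, X i p ∂ν = 0 :=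
    ⟨integrable_mul_fderiv_mul_withDensity_exp_neg _ hH (hv i).continuous hg hgs hh,
      integral_mul_fderiv_mul_withDensity_exp_neg_eq_zero hH (hv i)
        (fun p => pdx_comp_snd (F := fun v => v i) (by fun_prop) i) hg hgs hh⟩
  have hV (i : Fin d) : Integrable (V i) ν ∧ ∫ p, V i p ∂ν = 0 :=
    ⟨integrable_mul_fderiv_mul_withDensity_exp_neg _ hH (hpd₀ i).continuous hg hgs hh,
      integral_mul_fderiv_mul_withDensity_exp_neg_eq_zero hH (hpd₀ i)
        (fun p => pdv_comp_fst ((contDiff_pd hU₀ i).differentiable one_ne_zero _) i) hg hgs hh⟩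
  have key : ∫ p, (g p * LH U₀ h p + h p * LH U₀ g p
      - g p * h p * (∑ i, p.2 i * pd i U₁ p.1)) ∂ν = 0 := by
    simp only [mul_LH_add_mul_LH_sub_eq_sum_sub_sum (hU₀'.differentiable one_ne_zero)
      (hU₁.differentiable one_ne_zero)]
    change ∫ p, (∑ i, X i p - ∑ i, V i p) ∂ν = 0
    rw [integral_sub (integrable_finsetSum _ fun i _ => (hX i).1)
        (integrable_finsetSum _ fun i _ => (hV i).1),
      integral_finsetSum _ fun i _ => (hX i).1, integral_finsetSum _ fun i _ => (hV i).1]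
    simp [hX, hV]
  rw [integral_sub (by exact hgLH.add hhLH) hghU₁, integral_add hgLH hhLH] at key
  linarith

end PhaseSpace

theorem hamiltonian_adjoint_general {d : ℕ}
    (U₀ U₁ : (Fin d → ℝ) → ℝ)
    (hU₀ : ContDiff ℝ (⊤ : ℕ∞) U₀) (hU₁ : ContDiff ℝ (⊤ : ℕ∞) U₁)
    (Z : ℝ)
    (μ : Measure (Phase d)) (hμ : μ = gibbs d (fun x => U₀ x + U₁ x) Z)
    (g h : Phase d → ℝ)
    (hg : ContDiff ℝ (⊤ : ℕ∞) g) (hgs : HasCompactSupport g)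
    (hh : ContDiff ℝ (⊤ : ℕ∞) h) (hhs : HasCompactSupport h) :
    ∫ p, g p * LH U₀ h p ∂μ
      = (∫ p, h p * (-(∑ i, p.2 i * pdx i g p) + ∑ i, pd i U₀ p.1 * pdv i g p) ∂μ)
        + ∫ p, g p * h p * (∑ i, p.2 i * pd i U₁ p.1) ∂μ := by
  have hLH (p : Phase d) : -(∑ i, p.2 i * pdx i g p) + ∑ i, pd i U₀ p.1 * pdv i g p
      = -LH U₀ g p := by
    rw [LH, neg_sub, neg_add_eq_sub]
  simp only [hμ, gibbs_eq_smul_withDensity, integral_smul_measure, hLH, mul_neg, integral_neg]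
  rw [integral_mul_LH_withDensity_exp_neg_energy (hU₀.of_le (by norm_cast))
    (hU₁.of_le (by norm_cast)) (hg.of_le (by norm_cast)) hgs
    (hh.of_le (by norm_cast)) hhs, smul_add, smul_neg]

/-- Integration by parts for the Hamiltonian part of the generator:
`∫ g L_H h dμ = ∫ h (−v·∇_x g + ∇U₀·∇_v g) dμ + ∫ g h (v·∇U₁) dμ`. -/
theorem hamiltonian_adjoint {d : ℕ}
    (U₀ U₁ : (Fin d → ℝ) → ℝ)
    (hU₀ : ContDiff ℝ (⊤ : ℕ∞) U₀) (hU₁ : ContDiff ℝ (⊤ : ℕ∞) U₁)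
    (hint : Integrable (fun x : Fin d → ℝ => Real.exp (-(U₀ x + U₁ x))))
    (Z : ℝ)
    (hZ : Z = ∫ p : Phase d, Real.exp (-(U₀ p.1 + U₁ p.1) - (∑ i, p.2 i ^ 2) / 2))
    (μ : Measure (Phase d)) (hμ : μ = gibbs d (fun x => U₀ x + U₁ x) Z)
    (g h : Phase d → ℝ)
    (hg : ContDiff ℝ (⊤ : ℕ∞) g) (hgs : HasCompactSupport g)
    (hh : ContDiff ℝ (⊤ : ℕ∞) h) (hhs : HasCompactSupport h) :
    ∫ p, g p * LH U₀ h p ∂μ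
      = (∫ p, h p * (-(∑ i, p.2 i * pdx i g p) + ∑ i, pd i U₀ p.1 * pdv i g p) ∂μ)
        + ∫ p, g p * h p * (∑ i, p.2 i * pd i U₁ p.1) ∂μ :=
  hamiltonian_adjoint_general U₀ U₁ hU₀ hU₁ Z μ hμ g h hg hgs hh hhs
end
end

section
/- For every n ∈ ℕ with n ≥ 1 there exists a constant C > 0 such that for every smooth compactly supported function h : ℝ → ℝ, ∫_ℝ v^{2n} h(v)² e^{−v²/2} dv ≤ C Σ_{k=0}^{n} ∫_ℝ (h^{(k)}(v))² e^{−v²/2} dv, where h^{(k)} denotes the k-th derivative of h. -/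
/-!
Integrating `(v g²)' = g² + 2 v g g'` against `e^{-v²/2}`, whose derivative is `-v e^{-v²/2}`,
gives `∫ v² g² e^{-v²/2} = ∫ (g² + 2 v g g') e^{-v²/2}`; absorbing the cross term by AM–GM yields
`‖v g‖² ≤ 2 ‖g‖² + 4 ‖g'‖²` in `L²(e^{-v²/2} dv)`. Induct on `n` with `g = vⁿ h`: the derivative
`n vⁿ⁻¹ h + vⁿ h'` is controlled by the induction hypothesis applied to `h` and to `h'`, using
`v^{2(n-1)} ≤ 1 + v^{2n}`.
-/

open MeasureTheory Real
open scoped ContDiff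

noncomputable section

def gaussWeight (v : ℝ) : ℝ := exp (-v ^ 2 / 2)

def gaussNormSq (f : ℝ → ℝ) : ℝ := ∫ v, f v ^ 2 * gaussWeight v

def gaussSobolevNormSq (n : ℕ) (h : ℝ → ℝ) : ℝ :=
  ∑ k ∈ Finset.range (n + 1), gaussNormSq (iteratedDeriv k h)

lemma gaussWeight_pos (v : ℝ) : 0 < gaussWeight v := exp_pos _

lemma continuous_gaussWeight : Continuous gaussWeight := by
  unfold gaussWeight; fun_prop

lemma hasDerivAt_gaussWeight (v : ℝ) : HasDerivAt gaussWeight (-v * gaussWeight v) v := by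
  have h : HasDerivAt (fun v : ℝ => -v ^ 2 / 2) (-v) v :=
    ((hasDerivAt_pow 2 v).fun_neg.div_const 2).congr_deriv (by ring)
  unfold gaussWeight
  simpa only [mul_comm] using h.exp

lemma integrable_mul_gaussWeight {f : ℝ → ℝ} (hf : Continuous f) (hs : HasCompactSupport f) :
    Integrable (fun v => f v * gaussWeight v) :=
  (hf.mul continuous_gaussWeight).integrable_of_hasCompactSupport hs.mul_right

lemma integrable_sq_mul_gaussWeight {f : ℝ → ℝ} (hf : Continuous f) (hs : HasCompactSupport f) :
    Integrable (fun v => f v ^ 2 * gaussWeight v) :=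
  integrable_mul_gaussWeight (hf.pow 2)
    (hs.comp_left (g := fun x : ℝ => x ^ 2) (zero_pow two_ne_zero))

lemma integral_deriv_mul_gaussWeight {f : ℝ → ℝ} (hf : ContDiff ℝ 1 f)
    (hs : HasCompactSupport f) :
    ∫ v, deriv f v * gaussWeight v = ∫ v, v * f v * gaussWeight v := by
  have hint : Integrable (fun v => v * f v * gaussWeight v) :=
    integrable_mul_gaussWeight (by fun_prop) hs.mul_left
  have ibp := integral_mul_deriv_eq_deriv_mul_of_integrable
    (fun v _ => (hf.differentiable one_ne_zero v).hasDerivAt)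
    (fun v _ => hasDerivAt_gaussWeight v)
    (hint.neg.congr (.of_forall fun v => by simp only [Pi.neg_apply, Pi.mul_apply]; ring))
    (integrable_mul_gaussWeight (hf.continuous_deriv le_rfl) hs.deriv)
    (integrable_mul_gaussWeight hf.continuous hs)
  rw [← neg_eq_iff_eq_neg.mpr ibp, ← integral_neg]
  congr with v
  ring

lemma gaussNormSq_nonneg (f : ℝ → ℝ) : 0 ≤ gaussNormSq f :=
  integral_nonneg fun v => mul_nonneg (sq_nonneg _) (gaussWeight_pos v).le

lemma integral_mul_gaussWeight_le {F g₁ g₂ : ℝ → ℝ} {a b : ℝ}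
    (hF : Integrable (fun v => F v * gaussWeight v))
    (hg₁ : Integrable (fun v => g₁ v ^ 2 * gaussWeight v))
    (hg₂ : Integrable (fun v => g₂ v ^ 2 * gaussWeight v))
    (hle : ∀ v, F v ≤ a * g₁ v ^ 2 + b * g₂ v ^ 2) :
    ∫ v, F v * gaussWeight v ≤ a * gaussNormSq g₁ + b * gaussNormSq g₂ := by
  rw [gaussNormSq, gaussNormSq, ← integral_const_mul, ← integral_const_mul,
    ← integral_add (hg₁.const_mul a) (hg₂.const_mul b)]
  refine integral_mono hF ((hg₁.const_mul a).add (hg₂.const_mul b)) fun v => ?_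
  have := mul_le_mul_of_nonneg_right (hle v) (gaussWeight_pos v).le
  linarith

lemma gaussNormSq_id_mul_le {g : ℝ → ℝ} (hg : ContDiff ℝ 1 g) (hs : HasCompactSupport g) :
    gaussNormSq (fun v => v * g v) ≤ 2 * gaussNormSq g + 4 * gaussNormSq (deriv g) := by
  have hg' : Continuous (deriv g) := hg.continuous_deriv le_rfl
  have hs2 : HasCompactSupport fun v => g v ^ 2 :=
    hs.comp_left (g := fun x : ℝ => x ^ 2) (zero_pow two_ne_zero)
  have hcross : Integrable fun v => 2 * v * g v * deriv g v * gaussWeight v :=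
    integrable_mul_gaussWeight (by fun_prop) (hs.deriv.mul_left (f := fun v => 2 * v * g v))
  have hparts : gaussNormSq (fun v => v * g v) =
      gaussNormSq g + ∫ v, 2 * v * g v * deriv g v * gaussWeight v := by
    have hderiv : deriv (fun v => v * g v ^ 2) = fun v => g v ^ 2 + 2 * v * g v * deriv g v :=
      funext fun v => ((hasDerivAt_id v).mul
        ((hg.differentiable one_ne_zero v).hasDerivAt.pow 2)).deriv.trans (by simp; ring)
    have ibp := integral_deriv_mul_gaussWeight (f := fun v => v * g v ^ 2)
      (contDiff_id.mul (hg.pow 2)) hs2.mul_left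
    rw [hderiv] at ibp
    rw [gaussNormSq, gaussNormSq, ← integral_add (integrable_sq_mul_gaussWeight hg.continuous hs)
      hcross]
    convert ibp.symm using 3 with v <;> ring
  have hcross_le : ∫ v, 2 * v * g v * deriv g v * gaussWeight v ≤
      1 / 2 * gaussNormSq (fun v => v * g v) + 2 * gaussNormSq (deriv g) :=
    integral_mul_gaussWeight_le hcross
      (integrable_sq_mul_gaussWeight (by fun_prop) hs.mul_left)
      (integrable_sq_mul_gaussWeight hg' hs.deriv)
      fun v => by nlinarith [sq_nonneg (v * g v - 2 * deriv g v)]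
  linarith

lemma gaussNormSq_deriv_pow_mul_le (n : ℕ) {h : ℝ → ℝ} (hh : ContDiff ℝ 1 h)
    (hs : HasCompactSupport h) :
    gaussNormSq (deriv fun v => v ^ n * h v) ≤
      2 * n ^ 2 * gaussNormSq (fun v => v ^ (n - 1) * h v) +
        2 * gaussNormSq (fun v => v ^ n * deriv h v) := by
  have hh' : Continuous (deriv h) := hh.continuous_deriv le_rfl
  have hderiv :
      deriv (fun v => v ^ n * h v) = fun v => n * v ^ (n - 1) * h v + v ^ n * deriv h v :=
    funext fun v => ((hasDerivAt_pow n v).mul (hh.differentiable one_ne_zero v).hasDerivAt).deriv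
  rw [hderiv]
  exact integral_mul_gaussWeight_le
    (integrable_sq_mul_gaussWeight (by fun_prop) (hs.mul_left.add hs.deriv.mul_left))
    (integrable_sq_mul_gaussWeight (by fun_prop) hs.mul_left)
    (integrable_sq_mul_gaussWeight (by fun_prop) hs.deriv.mul_left)
    fun v => by nlinarith [sq_nonneg (n * v ^ (n - 1) * h v - v ^ n * deriv h v)]

lemma sq_pow_sub_one_le (n : ℕ) (v : ℝ) : (v ^ (n - 1)) ^ 2 ≤ 1 + (v ^ n) ^ 2 := by
  rw [← sq_abs (v ^ (n - 1)), ← sq_abs (v ^ n), abs_pow, abs_pow]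
  rcases le_or_gt |v| 1 with hv | hv
  · nlinarith [pow_le_one₀ (abs_nonneg v) hv (n := n - 1), pow_nonneg (abs_nonneg v) (n - 1)]
  · nlinarith [pow_le_pow_right₀ hv.le (Nat.sub_le n 1), pow_nonneg (abs_nonneg v) (n - 1)]

lemma gaussNormSq_pow_sub_one_mul_le (n : ℕ) {h : ℝ → ℝ} (hh : Continuous h)
    (hs : HasCompactSupport h) :
    gaussNormSq (fun v => v ^ (n - 1) * h v) ≤
      gaussNormSq h + gaussNormSq (fun v => v ^ n * h v) := by
  have := integral_mul_gaussWeight_le (F := fun v => (v ^ (n - 1) * h v) ^ 2)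
    (g₂ := fun v => v ^ n * h v) (a := 1) (b := 1)
    (integrable_sq_mul_gaussWeight (by fun_prop) hs.mul_left)
    (integrable_sq_mul_gaussWeight hh hs) (integrable_sq_mul_gaussWeight (by fun_prop) hs.mul_left)
    fun v => by nlinarith [sq_pow_sub_one_le n v, sq_nonneg (h v)]
  rwa [one_mul, one_mul] at this

lemma gaussSobolevNormSq_nonneg (n : ℕ) (h : ℝ → ℝ) : 0 ≤ gaussSobolevNormSq n h :=
  Finset.sum_nonneg fun _ _ => gaussNormSq_nonneg _

lemma gaussSobolevNormSq_succ (n : ℕ) (h : ℝ → ℝ) :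
    gaussSobolevNormSq (n + 1) h = gaussNormSq h + gaussSobolevNormSq n (deriv h) := by
  simp only [gaussSobolevNormSq, Finset.sum_range_succ' _ (n + 1), iteratedDeriv_succ',
    iteratedDeriv_zero]
  ring

lemma gaussSobolevNormSq_le_succ (n : ℕ) (h : ℝ → ℝ) :
    gaussSobolevNormSq n h ≤ gaussSobolevNormSq (n + 1) h := by
  rw [gaussSobolevNormSq, gaussSobolevNormSq, Finset.sum_range_succ _ (n + 1)]
  exact le_add_of_nonneg_right (gaussNormSq_nonneg _)

theorem gaussNormSq_pow_mul_le (n : ℕ) :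
    ∃ C > 0, ∀ h : ℝ → ℝ, ContDiff ℝ ∞ h → HasCompactSupport h →
      gaussNormSq (fun v => v ^ n * h v) ≤ C * gaussSobolevNormSq n h := by
  induction n with
  | zero => exact ⟨1, one_pos, fun h _ _ => by simp [gaussSobolevNormSq]⟩
  | succ n ih =>
    obtain ⟨C, hC, hbound⟩ := ih
    refine ⟨2 * C + 8 * n ^ 2 * (1 + C) + 8 * C, by positivity, fun h hh hs => ?_⟩
    have hh1 : ContDiff ℝ 1 h := hh.of_le (by exact_mod_cast le_top)
    have hh' : ContDiff ℝ ∞ (deriv h) := (contDiff_infty_iff_deriv.mp hh).2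
    have hg : ContDiff ℝ 1 fun v => v ^ n * h v := (contDiff_id.pow n).mul hh1
    have hsucc := gaussSobolevNormSq_succ n h
    have hh_le : gaussNormSq h ≤ gaussSobolevNormSq (n + 1) h := by
      linarith [gaussSobolevNormSq_nonneg n (deriv h)]
    have hg_le : gaussNormSq (fun v => v ^ n * h v) ≤ C * gaussSobolevNormSq (n + 1) h :=
      (hbound h hh hs).trans (by gcongr; exact gaussSobolevNormSq_le_succ n h)
    have hh'_le : gaussNormSq (fun v => v ^ n * deriv h v) ≤ C * gaussSobolevNormSq (n + 1) h :=
      (hbound (deriv h) hh' hs.deriv).trans (by gcongr; linarith [gaussNormSq_nonneg h])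
    have hg'_le : gaussNormSq (deriv fun v => v ^ n * h v) ≤
        2 * n ^ 2 * (gaussSobolevNormSq (n + 1) h + C * gaussSobolevNormSq (n + 1) h) +
          2 * (C * gaussSobolevNormSq (n + 1) h) :=
      calc _ ≤ 2 * n ^ 2 * gaussNormSq (fun v => v ^ (n - 1) * h v) +
            2 * gaussNormSq (fun v => v ^ n * deriv h v) := gaussNormSq_deriv_pow_mul_le n hh1 hs
        _ ≤ 2 * n ^ 2 * (gaussNormSq h + gaussNormSq (fun v => v ^ n * h v)) +
            2 * gaussNormSq (fun v => v ^ n * deriv h v) := by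
          gcongr; exact gaussNormSq_pow_sub_one_mul_le n hh.continuous hs
        _ ≤ _ := by gcongr
    calc gaussNormSq (fun v => v ^ (n + 1) * h v)
        = gaussNormSq (fun v => v * (v ^ n * h v)) := by congr 1; funext v; ring
      _ ≤ 2 * gaussNormSq (fun v => v ^ n * h v) +
            4 * gaussNormSq (deriv fun v => v ^ n * h v) :=
        gaussNormSq_id_mul_le hg hs.mul_left
      _ ≤ (2 * C + 8 * n ^ 2 * (1 + C) + 8 * C) * gaussSobolevNormSq (n + 1) h := by
        linarith

end

theorem gaussian_moment_bound_general (n : ℕ) :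
    ∃ C : ℝ, 0 < C ∧ ∀ h : ℝ → ℝ, ContDiff ℝ (⊤ : ℕ∞) h → HasCompactSupport h →
      ∫ v : ℝ, v ^ (2 * n) * h v ^ 2 * Real.exp (-v ^ 2 / 2)
        ≤ C * ∑ k ∈ Finset.range (n + 1),
            ∫ v : ℝ, (iteratedDeriv k h v) ^ 2 * Real.exp (-v ^ 2 / 2) := by
  obtain ⟨C, hC, hbound⟩ := gaussNormSq_pow_mul_le n
  refine ⟨C, hC, fun h hh hs => ?_⟩
  convert hbound h hh hs using 1
  · simp only [gaussNormSq, gaussWeight, mul_pow, ← pow_mul, mul_comm n 2]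
  · rfl

/-- generalized Villani lemma. For every `n ≥ 1` there exists `C > 0`
such that for every smooth compactly supported `h : ℝ → ℝ`,
`∫ v^{2n} h(v)² e^{−v²/2} dv ≤ C Σ_{k=0}^{n} ∫ (h⁽ᵏ⁾(v))² e^{−v²/2} dv`. -/
theorem gaussian_moment_bound (n : ℕ) (hn : 1 ≤ n) :
    ∃ C : ℝ, 0 < C ∧ ∀ h : ℝ → ℝ, ContDiff ℝ (⊤ : ℕ∞) h → HasCompactSupport h →
      ∫ v : ℝ, v ^ (2 * n) * h v ^ 2 * Real.exp (-v ^ 2 / 2)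
        ≤ C * ∑ k ∈ Finset.range (n + 1),
            ∫ v : ℝ, (iteratedDeriv k h v) ^ 2 * Real.exp (-v ^ 2 / 2) :=
  gaussian_moment_bound_general n
end

section
/- Suppose −x·∇U₀(x) ≤ −κ|x|² for all x outside a compact set K (for some κ > 0), and ∇²U₀ is bounded. Define V_b(x,v) = exp(b(U₀(x) + |v|²/2 − a x·v/√(1+|x|²))) and L₁* h = −v·∇_x h + (∇U₀ − γv)·∇_v h + γ Δ_v h. Then there exist a > 0 and b₀ ∈ (0,1) such that for all b ∈ (0,b₀) there exist constants C₁, C₂, C₃ > 0 with L₁* V_b(x,v) ≤ (C₁ − C₂|v|² − C₃|x|) V_b(x,v) for all (x,v) ∈ ℝ^d × ℝ^d. -/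
open MeasureTheory ProbabilityTheory Real

noncomputable section

/-- Lyapunov weight `V_b(x,v) = exp(b(U₀(x) + |v|²/2 − a x·v/√(1+|x|²)))`. -/
def Vb {d : ℕ} (U₀ : (Fin d → ℝ) → ℝ) (a b : ℝ) (p : Phase d) : ℝ :=
  Real.exp (b * (U₀ p.1 + (∑ i, p.2 i ^ 2) / 2
    - a * (∑ i, p.1 i * p.2 i) / Real.sqrt (1 + ∑ i, p.1 i ^ 2)))

/-- Langevin adjoint part `L₁* h = −v·∇_x h + (∇U₀ − γv)·∇_v h + γ Δ_v h`. -/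
def L1star {d : ℕ} (γ : ℝ) (U₀ : (Fin d → ℝ) → ℝ) (f : Phase d → ℝ) (p : Phase d) : ℝ :=
  -(∑ i, p.2 i * pdx i f p) + (∑ i, (pd i U₀ p.1 - γ * p.2 i) * pdv i f p)
    + γ * ∑ i, pdv i (pdv i f) p

/-! The exponent `H = U₀ + |v|²/2 − a x·v/⟨x⟩` of `V_b = e^{bH}` (with `⟨x⟩ = √(1+|x|²)`) gives
`L₁* V_b = (b L₁* H + γ b² |∇_v H|²) V_b`. In `L₁* H` the Hamiltonian terms `∓ v·∇U₀` cancel,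
leaving the friction `−γ|v|²`, the confinement `−a x·∇U₀/⟨x⟩ ≤ a (A − κ|x|)` (with `A` from
the compact `K`), and cross terms `a|v|²/⟨x⟩ + aγ x·v/⟨x⟩ − a (x·v)²/⟨x⟩³` which the friction
dominates once `a ≤ γ/2`.
The Itô term `γ b² |∇_v H|² ≤ 2γ b² (|v|² + a²)` is absorbed for `b ≤ 1/16`. -/

section Coordinates
variable {ι : Type*} [Fintype ι]

lemma sum_add_smul_single_sq [DecidableEq ι] (x : ι → ℝ) (i : ι) (t : ℝ) :
    ∑ j, (x + t • Pi.single i 1 : ι → ℝ) j ^ 2 = ∑ j, x j ^ 2 + 2 * t * x i + t ^ 2 := by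
  simp only [Pi.add_apply, Pi.smul_apply, Pi.single_apply, smul_eq_mul, mul_ite, mul_one,
    mul_zero, add_sq, ite_pow, ne_eq, OfNat.ofNat_ne_zero, not_false_eq_true, zero_pow,
    Finset.sum_add_distrib, Finset.sum_ite_eq', Finset.mem_univ, ↓reduceIte]
  ring

lemma sum_add_smul_single_mul [DecidableEq ι] (x y : ι → ℝ) (i : ι) (t : ℝ) :
    ∑ j, (x + t • Pi.single i 1 : ι → ℝ) j * y j = ∑ j, x j * y j + t * y i := by
  simp [add_mul, Finset.sum_add_distrib, Pi.single_apply]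

lemma sum_mul_add_smul_single [DecidableEq ι] (x y : ι → ℝ) (i : ι) (t : ℝ) :
    ∑ j, x j * (y + t • Pi.single i 1 : ι → ℝ) j = ∑ j, x j * y j + t * x i := by
  simp only [Pi.add_apply, Pi.smul_apply, Pi.single_apply, smul_eq_mul, mul_ite, mul_one,
    mul_zero, mul_add, Finset.sum_add_distrib, Finset.sum_ite_eq', Finset.mem_univ, ↓reduceIte]
  ring

def japaneseBracket (x : ι → ℝ) : ℝ := √(1 + ∑ i, x i ^ 2)

lemma japaneseBracket_pos (x : ι → ℝ) : 0 < japaneseBracket x := by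
  unfold japaneseBracket
  positivity

lemma one_le_japaneseBracket (x : ι → ℝ) : 1 ≤ japaneseBracket x :=
  Real.one_le_sqrt.2 (le_add_of_nonneg_right (by positivity))

lemma sq_japaneseBracket (x : ι → ℝ) : japaneseBracket x ^ 2 = 1 + ∑ i, x i ^ 2 :=
  Real.sq_sqrt (by positivity)

lemma differentiable_japaneseBracket : Differentiable ℝ (japaneseBracket (ι := ι)) := by
  unfold japaneseBracket
  fun_prop (disch := intro x; positivity)

lemma hasLineDerivAt_japaneseBracket [DecidableEq ι] (x : ι → ℝ) (i : ι) :
    HasLineDerivAt ℝ japaneseBracket (x i / japaneseBracket x) x (Pi.single i 1) := by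
  unfold HasLineDerivAt
  simp only [japaneseBracket, sum_add_smul_single_sq]
  have h : HasDerivAt (fun t : ℝ => 1 + (∑ j, x j ^ 2 + 2 * t * x i + t ^ 2)) (2 * x i) 0 := by
    simpa [add_assoc] using ((((hasDerivAt_id' (0 : ℝ)).const_mul 2).mul_const (x i)).add
      (hasDerivAt_pow 2 (0 : ℝ))).const_add (∑ j, x j ^ 2) |>.const_add 1
  refine (h.sqrt (by ring_nf; positivity)).congr_deriv ?_
  ring_nf

lemma sum_mul_div_japaneseBracket_le (x v : ι → ℝ) :
    (∑ i, x i * v i) / japaneseBracket x ≤ √(∑ i, v i ^ 2) := by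
  rw [div_le_iff₀ (japaneseBracket_pos x)]
  calc ∑ i, x i * v i ≤ √(∑ i, x i ^ 2) * √(∑ i, v i ^ 2) := Real.sum_mul_le_sqrt_mul_sqrt _ _ _
    _ ≤ √(∑ i, v i ^ 2) * japaneseBracket x := by
      rw [mul_comm]
      gcongr
      exact Real.sqrt_le_sqrt (by linarith)

lemma sqrt_sub_one_le_div_sqrt_one_add {s : ℝ} (hs : 0 ≤ s) : √s - 1 ≤ s / √(1 + s) := by
  have hr := Real.sq_sqrt hs
  have hr0 := Real.sqrt_nonneg s
  have hS : √(1 + s) ≤ 1 + √s := Real.sqrt_le_iff.2 ⟨by positivity, by nlinarith⟩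
  rw [le_div_iff₀ (by positivity)]
  rcases le_or_gt (√s) 1 with h | h
  · nlinarith [Real.sqrt_nonneg (1 + s)]
  · nlinarith

lemma exists_div_japaneseBracket_le_of_confining {φ : (ι → ℝ) → ℝ} (hφ : Continuous φ)
    {κ : ℝ} (hκ : 0 ≤ κ) {K : Set (ι → ℝ)} (hK : IsCompact K)
    (hconf : ∀ x ∉ K, φ x ≤ -κ * ∑ i, x i ^ 2) :
    ∃ A, 0 ≤ A ∧ ∀ x, φ x / japaneseBracket x ≤ -κ * √(∑ i, x i ^ 2) + A := by
  have hg : Continuous fun x => φ x / japaneseBracket x + κ * √(∑ i, x i ^ 2) :=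
    (hφ.div differentiable_japaneseBracket.continuous fun x => (japaneseBracket_pos x).ne').add
      (by fun_prop)
  obtain ⟨C, hC⟩ := hK.bddAbove_image hg.continuousOn
  refine ⟨max C κ, le_max_of_le_right hκ, fun x => ?_⟩
  suffices φ x / japaneseBracket x + κ * √(∑ i, x i ^ 2) ≤ max C κ by linarith
  by_cases hx : x ∈ K
  · exact (hC ⟨x, hx, rfl⟩).trans (le_max_left _ _)
  refine le_max_of_le_right ?_
  have hS := japaneseBracket_pos x
  have hgap : 0 ≤ κ * ((∑ i, x i ^ 2) / japaneseBracket x - (√(∑ i, x i ^ 2) - 1)) :=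
    mul_nonneg hκ (sub_nonneg.2 (sqrt_sub_one_le_div_sqrt_one_add (by positivity)))
  calc φ x / japaneseBracket x + κ * √(∑ i, x i ^ 2)
      ≤ -κ * (∑ i, x i ^ 2) / japaneseBracket x + κ * √(∑ i, x i ^ 2) := by
        gcongr
        exact hconf x hx
    _ = κ - κ * ((∑ i, x i ^ 2) / japaneseBracket x - (√(∑ i, x i ^ 2) - 1)) := by ring
    _ ≤ κ := by linarith

end Coordinates

section PhaseSpace
variable {d : ℕ}

lemma pdx_eq_of_hasLineDerivAt {f : Phase d → ℝ} {p : Phase d} {i : Fin d} {D : ℝ}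
    (hf : DifferentiableAt ℝ f p) (h : HasLineDerivAt ℝ f D p (Pi.single i 1, 0)) :
    pdx i f p = D :=
  hf.lineDeriv_eq_fderiv.symm.trans h.lineDeriv

lemma pdv_eq_of_hasLineDerivAt {f : Phase d → ℝ} {p : Phase d} {i : Fin d} {D : ℝ}
    (hf : DifferentiableAt ℝ f p) (h : HasLineDerivAt ℝ f D p (0, Pi.single i 1)) :
    pdv i f p = D :=
  hf.lineDeriv_eq_fderiv.symm.trans h.lineDeriv

def tiltedEnergy (U₀ : (Fin d → ℝ) → ℝ) (a : ℝ) (p : Phase d) : ℝ :=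
  U₀ p.1 + (∑ i, p.2 i ^ 2) / 2 - a * (∑ i, p.1 i * p.2 i) / japaneseBracket p.1

def velocityGrad (a : ℝ) (p : Phase d) (i : Fin d) : ℝ :=
  p.2 i - a * p.1 i / japaneseBracket p.1

lemma Vb_eq_exp (U₀ : (Fin d → ℝ) → ℝ) (a b : ℝ) :
    Vb U₀ a b = fun p => exp (b * tiltedEnergy U₀ a p) := rfl

lemma differentiable_tiltedEnergy {U₀ : (Fin d → ℝ) → ℝ} (hU₀ : Differentiable ℝ U₀) (a : ℝ) :
    Differentiable ℝ (tiltedEnergy U₀ a) := by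
  have := differentiable_japaneseBracket (ι := Fin d)
  unfold tiltedEnergy
  simp only [div_eq_mul_inv]
  fun_prop (disch := exact fun p => (japaneseBracket_pos _).ne')

lemma differentiable_velocityGrad (a : ℝ) (i : Fin d) :
    Differentiable ℝ fun p : Phase d => velocityGrad a p i := by
  have := differentiable_japaneseBracket (ι := Fin d)
  unfold velocityGrad
  simp only [div_eq_mul_inv]
  fun_prop (disch := exact fun p => (japaneseBracket_pos _).ne')

lemma differentiable_Vb {U₀ : (Fin d → ℝ) → ℝ} (hU₀ : Differentiable ℝ U₀) (a b : ℝ) :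
    Differentiable ℝ (Vb U₀ a b) := by
  rw [Vb_eq_exp]
  exact ((differentiable_tiltedEnergy hU₀ a).const_mul b).exp

lemma velocityGrad_add_velocity (a : ℝ) (p : Phase d) (i : Fin d) (t : ℝ) :
    velocityGrad a (p + t • (0, Pi.single i 1)) i = velocityGrad a p i + t := by
  simp only [velocityGrad, Prod.smul_mk, smul_zero, Prod.snd_add, Prod.fst_add, Pi.add_apply,
    Pi.smul_apply, Pi.single_eq_same, smul_eq_mul, mul_one, Pi.zero_apply, add_zero]
  ring

lemma tiltedEnergy_add_velocity (U₀ : (Fin d → ℝ) → ℝ) (a : ℝ) (p : Phase d) (i : Fin d)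
    (t : ℝ) :
    tiltedEnergy U₀ a (p + t • (0, Pi.single i 1))
      = tiltedEnergy U₀ a p + t * velocityGrad a p i + t ^ 2 / 2 := by
  simp only [tiltedEnergy, velocityGrad, Prod.fst_add, Prod.snd_add, Prod.smul_fst,
    Prod.smul_snd, smul_zero, add_zero, sum_add_smul_single_sq, sum_mul_add_smul_single]
  ring

lemma hasLineDerivAt_Vb_velocity (U₀ : (Fin d → ℝ) → ℝ) (a b : ℝ) (p : Phase d) (i : Fin d) :
    HasLineDerivAt ℝ (Vb U₀ a b) (b * velocityGrad a p i * Vb U₀ a b p) p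
      (0, Pi.single i 1) := by
  unfold HasLineDerivAt
  simp only [Vb_eq_exp, tiltedEnergy_add_velocity]
  have h : HasDerivAt
      (fun t : ℝ => b * (tiltedEnergy U₀ a p + t * velocityGrad a p i + t ^ 2 / 2))
      (b * velocityGrad a p i) 0 := by
    simpa [add_assoc] using ((((hasDerivAt_id' (0 : ℝ)).mul_const (velocityGrad a p i)).add
      ((hasDerivAt_pow 2 (0 : ℝ)).div_const 2)).const_add (tiltedEnergy U₀ a p)).const_mul b
  simpa [mul_comm] using h.exp

lemma hasLineDerivAt_tiltedEnergy_position {U₀ : (Fin d → ℝ) → ℝ} {p : Phase d}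
    (hU₀ : DifferentiableAt ℝ U₀ p.1) (a : ℝ) (i : Fin d) :
    HasLineDerivAt ℝ (tiltedEnergy U₀ a)
      (pd i U₀ p.1 - a * (p.2 i / japaneseBracket p.1
        - (∑ j, p.1 j * p.2 j) * p.1 i / japaneseBracket p.1 ^ 3)) p (Pi.single i 1, 0) := by
  unfold HasLineDerivAt tiltedEnergy
  simp only [Prod.fst_add, Prod.snd_add, Prod.smul_fst, Prod.smul_snd, smul_zero, add_zero,
    sum_add_smul_single_mul]
  have hU : HasDerivAt (fun t : ℝ => U₀ (p.1 + t • Pi.single i 1)) (pd i U₀ p.1) 0 :=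
    hU₀.hasFDerivAt.hasLineDerivAt _
  have hN : HasDerivAt (fun t : ℝ => a * (∑ j, p.1 j * p.2 j + t * p.2 i)) (a * p.2 i) 0 := by
    simpa using (((hasDerivAt_id' (0 : ℝ)).mul_const (p.2 i)).const_add _).const_mul a
  have hS0 := (japaneseBracket_pos p.1).ne'
  refine ((hU.add_const _).sub ((hN.fun_div (hasLineDerivAt_japaneseBracket p.1 i))
    (by simpa using hS0))).congr_deriv ?_
  simp only [zero_smul, add_zero, zero_mul]
  field_simp

lemma pdx_Vb {U₀ : (Fin d → ℝ) → ℝ} (hU₀ : Differentiable ℝ U₀) (a b : ℝ) (i : Fin d)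
    (p : Phase d) :
    pdx i (Vb U₀ a b) p
      = b * (pd i U₀ p.1 - a * (p.2 i / japaneseBracket p.1
        - (∑ j, p.1 j * p.2 j) * p.1 i / japaneseBracket p.1 ^ 3)) * Vb U₀ a b p := by
  refine pdx_eq_of_hasLineDerivAt (differentiable_Vb hU₀ a b p) ?_
  rw [Vb_eq_exp]
  exact (((hasLineDerivAt_tiltedEnergy_position (hU₀ p.1) a i).const_mul b).exp).congr_deriv
    (by simp [mul_comm])

lemma pdv_Vb {U₀ : (Fin d → ℝ) → ℝ} (hU₀ : Differentiable ℝ U₀) (a b : ℝ) (i : Fin d) :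
    pdv i (Vb U₀ a b) = fun p => b * velocityGrad a p i * Vb U₀ a b p :=
  funext fun p => pdv_eq_of_hasLineDerivAt (differentiable_Vb hU₀ a b p)
    (hasLineDerivAt_Vb_velocity U₀ a b p i)

lemma pdv_pdv_Vb {U₀ : (Fin d → ℝ) → ℝ} (hU₀ : Differentiable ℝ U₀) (a b : ℝ) (i : Fin d)
    (p : Phase d) :
    pdv i (pdv i (Vb U₀ a b)) p = (b + (b * velocityGrad a p i) ^ 2) * Vb U₀ a b p := by
  rw [pdv_Vb hU₀]
  refine pdv_eq_of_hasLineDerivAt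
    (((differentiable_velocityGrad a i).const_mul b).mul (differentiable_Vb hU₀ a b) p) ?_
  have hline : HasDerivAt (fun t : ℝ => b * (velocityGrad a p i + t)) b 0 := by
    simpa using ((hasDerivAt_id (0 : ℝ)).const_add (velocityGrad a p i)).const_mul b
  unfold HasLineDerivAt
  simp only [velocityGrad_add_velocity]
  refine (hline.fun_mul (hasLineDerivAt_Vb_velocity U₀ a b p i)).congr_deriv ?_
  simp only [zero_smul, add_zero]
  ring

lemma L1star_Vb {U₀ : (Fin d → ℝ) → ℝ} (hU₀ : Differentiable ℝ U₀) (γ a b : ℝ) (p : Phase d) :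
    L1star γ U₀ (Vb U₀ a b) p
      = (b * (a * (∑ i, p.2 i ^ 2) / japaneseBracket p.1
            - a * (∑ i, p.1 i * p.2 i) ^ 2 / japaneseBracket p.1 ^ 3
            - a * (∑ i, p.1 i * pd i U₀ p.1) / japaneseBracket p.1
            - γ * ∑ i, p.2 i ^ 2
            + a * γ * (∑ i, p.1 i * p.2 i) / japaneseBracket p.1)
          + γ * (d * b + b ^ 2 * ∑ i, velocityGrad a p i ^ 2)) * Vb U₀ a b p := by
  have hS : japaneseBracket p.1 ≠ 0 := (japaneseBracket_pos p.1).ne'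
  have hterm : ∀ i, -(p.2 i * pdx i (Vb U₀ a b) p)
      + (pd i U₀ p.1 - γ * p.2 i) * pdv i (Vb U₀ a b) p + γ * pdv i (pdv i (Vb U₀ a b)) p
      = Vb U₀ a b p * (b * a / japaneseBracket p.1 * p.2 i ^ 2
          - b * a * (∑ j, p.1 j * p.2 j) / japaneseBracket p.1 ^ 3 * (p.1 i * p.2 i)
          - b * a / japaneseBracket p.1 * (p.1 i * pd i U₀ p.1) - b * γ * p.2 i ^ 2
          + b * a * γ / japaneseBracket p.1 * (p.1 i * p.2 i) + γ * b
          + γ * b ^ 2 * velocityGrad a p i ^ 2) := by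
    intro i
    rw [pdv_pdv_Vb hU₀, pdx_Vb hU₀, pdv_Vb hU₀]
    simp only [velocityGrad]
    field_simp
    ring
  unfold L1star
  rw [← Finset.sum_neg_distrib, Finset.mul_sum, ← Finset.sum_add_distrib,
    ← Finset.sum_add_distrib, Finset.sum_congr rfl fun i _ => hterm i, ← Finset.mul_sum]
  simp only [Finset.sum_add_distrib, Finset.sum_sub_distrib, ← Finset.mul_sum, Finset.sum_const,
    Finset.card_univ, Fintype.card_fin, nsmul_eq_mul]
  ring

lemma sum_velocityGrad_sq_le (a : ℝ) (p : Phase d) :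
    ∑ i, velocityGrad a p i ^ 2 ≤ 2 * ∑ i, p.2 i ^ 2 + 2 * a ^ 2 := by
  have hS := japaneseBracket_pos p.1
  have hX : (∑ i, p.1 i ^ 2) / japaneseBracket p.1 ^ 2 ≤ 1 := by
    rw [div_le_one (by positivity), sq_japaneseBracket]
    linarith
  have hsq (u w : ℝ) : (u - w) ^ 2 ≤ 2 * u ^ 2 + 2 * w ^ 2 := by nlinarith [sq_nonneg (u + w)]
  calc ∑ i, velocityGrad a p i ^ 2
      ≤ ∑ i, (2 * p.2 i ^ 2 + 2 * a ^ 2 / japaneseBracket p.1 ^ 2 * p.1 i ^ 2) := by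
        gcongr with i
        exact (hsq _ _).trans_eq (by ring)
    _ = 2 * ∑ i, p.2 i ^ 2 + 2 * a ^ 2 * ((∑ i, p.1 i ^ 2) / japaneseBracket p.1 ^ 2) := by
        rw [Finset.sum_add_distrib, ← Finset.mul_sum, ← Finset.mul_sum]
        ring
    _ ≤ 2 * ∑ i, p.2 i ^ 2 + 2 * a ^ 2 := by nlinarith [sq_nonneg a]

end PhaseSpace

-- Read `S = ⟨x⟩`, `V = |v|²`, `N = x·v`, `F = x·∇U₀`, `E = |∇_v H|²`, `r = |x|`, `n = d`.
lemma lyapunov_rate_le {γ a b κ A n S V N F E r : ℝ} (hγ : 0 < γ) (ha : 0 < a)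
    (haγ : a ≤ γ / 2) (hb : 0 < b) (hb16 : b ≤ 1 / 16) (hS : 1 ≤ S) (hV : 0 ≤ V)
    (hN : N / S ≤ √V) (hF : -F / S ≤ -κ * r + A) (hE : E ≤ 2 * V + 2 * a ^ 2) :
    b * (a * V / S - a * N ^ 2 / S ^ 3 - a * F / S - γ * V + a * γ * N / S)
        + γ * (n * b + b ^ 2 * E)
      ≤ b * (a * A + 3 * a ^ 2 * γ + γ * n) - b * γ / 4 * V - a * b * κ * r := by
  have hS0 : 0 < S := by linarith
  have hkinetic : a * V / S ≤ a * V := div_le_self (by positivity) hS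
  have hcross : 0 ≤ a * N ^ 2 / S ^ 3 := by positivity
  have hconf : -(a * F / S) ≤ a * (-κ * r + A) := by
    calc -(a * F / S) = a * (-F / S) := by ring
      _ ≤ a * (-κ * r + A) := by gcongr
  have hmixed : a * γ * N / S ≤ γ / 8 * V + 2 * a ^ 2 * γ := by
    have hsq := Real.sq_sqrt hV
    calc a * γ * N / S = a * γ * (N / S) := by ring
      _ ≤ a * γ * √V := by gcongr
      _ ≤ γ / 8 * V + 2 * a ^ 2 * γ := by nlinarith [mul_nonneg hγ.le (sq_nonneg (√V - 4 * a))]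
  have hdrift : a * V / S - a * N ^ 2 / S ^ 3 - a * F / S - γ * V + a * γ * N / S
      ≤ -(3 / 8) * γ * V + a * (-κ * r + A) + 2 * a ^ 2 * γ := by
    nlinarith
  have hdiff : γ * (n * b + b ^ 2 * E) ≤ γ * (n * b + b ^ 2 * (2 * V + 2 * a ^ 2)) := by
    gcongr
  nlinarith [mul_le_mul_of_nonneg_left hdrift hb.le, mul_nonneg (mul_nonneg hb.le hγ.le) hV,
    mul_nonneg (mul_nonneg hb.le hγ.le) (sq_nonneg a)]

theorem langevin_lyapunov_general {d : ℕ}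
    (U₀ : (Fin d → ℝ) → ℝ) (hU₀ : ContDiff ℝ (⊤ : ℕ∞) U₀)
    (γ : ℝ) (hγ : 0 < γ)
    (κ : ℝ) (hκ : 0 < κ) (K : Set (Fin d → ℝ)) (hK : IsCompact K)
    (hconf : ∀ x ∉ K, -(∑ i, x i * pd i U₀ x) ≤ -κ * ∑ i, x i ^ 2) :
    ∃ a : ℝ, 0 < a ∧ ∃ b₀ ∈ Set.Ioo (0 : ℝ) 1, ∀ b ∈ Set.Ioo (0 : ℝ) b₀,
      ∃ C₁ : ℝ, 0 < C₁ ∧ ∃ C₂ : ℝ, 0 < C₂ ∧ ∃ C₃ : ℝ, 0 < C₃ ∧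
        ∀ p : Phase d,
          L1star γ U₀ (Vb U₀ a b) p
            ≤ (C₁ - C₂ * (∑ i, p.2 i ^ 2) - C₃ * Real.sqrt (∑ i, p.1 i ^ 2))
                * Vb U₀ a b p := by
  have hU₀' : Differentiable ℝ U₀ := hU₀.differentiable (by simp)
  have hφ : Continuous fun x => -(∑ i, x i * pd i U₀ x) := by
    have := hU₀.continuous_fderiv (by simp)
    unfold pd
    fun_prop
  obtain ⟨A, hA, hφA⟩ := exists_div_japaneseBracket_le_of_confining hφ hκ.le hK hconf
  refine ⟨γ / 2, by positivity, 1 / 16, by norm_num, fun b ⟨hb, hb16⟩ => ?_⟩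
  refine ⟨b * (γ / 2 * A + 3 * (γ / 2) ^ 2 * γ + γ * d), by positivity, b * γ / 4, by positivity,
    γ / 2 * b * κ, by positivity, fun p => ?_⟩
  rw [L1star_Vb hU₀']
  refine mul_le_mul_of_nonneg_right ?_ (exp_pos _).le
  exact lyapunov_rate_le hγ (by positivity) le_rfl hb hb16.le (one_le_japaneseBracket p.1)
    (by positivity) (sum_mul_div_japaneseBracket_le p.1 p.2) (hφA p.1) (sum_velocityGrad_sq_le _ p)

/-- Lyapunov property of `V_b` for the Langevin adjoint part:
under confinement (`−x·∇U₀(x) ≤ −κ|x|²` outside a compact set) and boundedness of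
`∇²U₀`, there exist `a > 0`, `b₀ ∈ (0,1)` such that for every `b ∈ (0,b₀)` there are
`C₁, C₂, C₃ > 0` with `L₁* V_b ≤ (C₁ − C₂|v|² − C₃|x|) V_b` everywhere. -/
theorem langevin_lyapunov {d : ℕ}
    (U₀ : (Fin d → ℝ) → ℝ) (hU₀ : ContDiff ℝ (⊤ : ℕ∞) U₀)
    (γ : ℝ) (hγ : 0 < γ)
    (M : ℝ) (hM : ∀ x, ‖iteratedFDeriv ℝ 2 U₀ x‖ ≤ M)
    (κ : ℝ) (hκ : 0 < κ) (K : Set (Fin d → ℝ)) (hK : IsCompact K)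
    (hconf : ∀ x ∉ K, -(∑ i, x i * pd i U₀ x) ≤ -κ * ∑ i, x i ^ 2) :
    ∃ a : ℝ, 0 < a ∧ ∃ b₀ ∈ Set.Ioo (0 : ℝ) 1, ∀ b ∈ Set.Ioo (0 : ℝ) b₀,
      ∃ C₁ : ℝ, 0 < C₁ ∧ ∃ C₂ : ℝ, 0 < C₂ ∧ ∃ C₃ : ℝ, 0 < C₃ ∧
        ∀ p : Phase d,
          L1star γ U₀ (Vb U₀ a b) p
            ≤ (C₁ - C₂ * (∑ i, p.2 i ^ 2) - C₃ * Real.sqrt (∑ i, p.1 i ^ 2))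
                * Vb U₀ a b p :=
  langevin_lyapunov_general U₀ hU₀ γ hγ κ hκ K hK hconf
end
end

section
/- Define V_b(x,v) = exp(b(U₀(x) + |v|²/2 − a x·v/√(1+|x|²))) and L₂* h(x,v) = (2/(1−ρ)) Σ_{i=1}^d E[(h(x,Vⁱ) − h(x,v)) Ψ((∂_i U₁(x)/2)(Vⁱ_i − v_i))]. Then for a > 0 and b ∈ (0,1) small enough there exists C > 0 such that L₂* V_b(x,v) ≤ C (1 + |v|) V_b(x,v) for all (x,v) ∈ ℝ^d × ℝ^d; in particular the Gaussian expectations defining L₂* V_b are finite. -/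
open MeasureTheory ProbabilityTheory Real

noncomputable section

/-- Jump adjoint part
`L₂* h(x,v) = (2/(1−ρ)) Σᵢ E[(h(x,Vⁱ) − h(x,v)) Ψ((∂ᵢU₁(x)/2)(Vⁱᵢ − vᵢ))]`. -/
def L2star {d : ℕ} (ρ : ℝ) (Ψ : ℝ → ℝ) (U₁ : (Fin d → ℝ) → ℝ)
    (f : Phase d → ℝ) (p : Phase d) : ℝ :=
  (2 / (1 - ρ)) * ∑ i, ∫ ξ, (f (p.1, jumpV ρ p.2 i ξ) - f p)
      * Ψ (pd i U₁ p.1 / 2 * ((ρ * p.2 i + Real.sqrt (1 - ρ ^ 2) * ξ) - p.2 i))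
      ∂(gaussianReal 0 1)

/-!
A jump replaces `vᵢ` by `ρ vᵢ + √(1-ρ²) ξ`, so `V_b(x,Vⁱ) / V_b(x,v)` is the exponential of `b`
times a quadratic in `(vᵢ, ξ)` whose `vᵢ²` coefficient is `-(1-ρ²)/2 < 0`. Completing squares
bounds that quadratic by `ξ² + |ξ| + 4/(1-ρ²)`, uniformly in `(x, v)` as soon as `a ≤ 1`, because
`|xᵢ| ≤ √(1+|x|²)`. For `b ≤ 1/4` the jump increment of `V_b` is therefore at most a constant times
`exp(3ξ²/8) V_b(x,v)`, which is integrable against the standard Gaussian; and since `Ψ` is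
Lipschitz and `∂ᵢU₁` is bounded, `Ψ` grows at most like `(1+|v|)(1+|ξ|)` along the jump.
-/

lemma integrable_exp_mul_sq_gaussianReal {c : ℝ} (hc : c < 1 / 2) :
    Integrable (fun x : ℝ => exp (c * x ^ 2)) (gaussianReal 0 1) := by
  rw [gaussianReal_of_var_ne_zero 0 one_ne_zero, integrable_withDensity_iff
    (measurable_gaussianPDF 0 1) (ae_of_all _ fun _ => ENNReal.ofReal_lt_top)]
  have hdensity : (fun x : ℝ => exp (c * x ^ 2) * (gaussianPDF 0 1 x).toReal)
      = fun x => (√(2 * π))⁻¹ * exp (-(1 / 2 - c) * x ^ 2) := by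
    funext x
    rw [gaussianPDF, ENNReal.toReal_ofReal (gaussianPDFReal_nonneg _ _ _), gaussianPDFReal]
    push_cast
    rw [mul_one, mul_comm, mul_assoc, ← exp_add]
    ring_nf
  rw [hdensity]
  exact (integrable_exp_neg_mul_sq (by linarith)).const_mul _

lemma Fintype.sum_apply_update {ι α M : Type*} [Fintype ι] [DecidableEq ι] [AddCommGroup M]
    (f : ι → α → M) (v : ι → α) (i : ι) (w : α) :
    ∑ j, f j (Function.update v i w j) = ∑ j, f j (v j) - f i (v i) + f i w := by
  rw [funext (Function.apply_update f v i w), Finset.sum_update_of_mem (Finset.mem_univ i),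
    Finset.sdiff_singleton_eq_erase, Finset.sum_erase_eq_sub (Finset.mem_univ i)]
  abel

lemma abs_le_sqrt_sum_sq {ι : Type*} [Fintype ι] (v : ι → ℝ) (i : ι) :
    |v i| ≤ √(∑ j, v j ^ 2) :=
  Real.abs_le_sqrt (Finset.single_le_sum (fun j _ => sq_nonneg (v j)) (Finset.mem_univ i))

lemma abs_div_sqrt_one_add_sum_sq_le_one {ι : Type*} [Fintype ι] (x : ι → ℝ) (i : ι) :
    |x i / √(1 + ∑ j, x j ^ 2)| ≤ 1 := by
  have hpos : 0 < √(1 + ∑ j, x j ^ 2) := Real.sqrt_pos.mpr (by positivity)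
  rw [abs_div, abs_of_pos hpos, div_le_one hpos]
  exact (abs_le_sqrt_sum_sq x i).trans (Real.sqrt_le_sqrt (by linarith))

lemma abs_pd_le_norm_fderiv {d : ℕ} (i : Fin d) (U : (Fin d → ℝ) → ℝ) (x : Fin d → ℝ) :
    |pd i U x| ≤ ‖fderiv ℝ U x‖ := by
  simpa [pd, Pi.norm_single] using (fderiv ℝ U x).le_opNorm (Pi.single i 1)

lemma apply_le_apply_zero_add_mul_abs {f : ℝ → ℝ} {M : ℝ} (hf : Differentiable ℝ f)
    (hM : ∀ s, |deriv f s| ≤ M) (z : ℝ) : f z ≤ f 0 + M * |z| := by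
  have h := Convex.norm_image_sub_le_of_norm_deriv_le (fun x _ => hf x) (fun x _ => hM x)
    convex_univ (Set.mem_univ 0) (Set.mem_univ z)
  simp only [Real.norm_eq_abs, sub_zero] at h
  linarith [le_abs_self (f z - f 0)]

lemma Vb_jumpV {d : ℕ} (U₀ : (Fin d → ℝ) → ℝ) (a b ρ : ℝ) (x v : Fin d → ℝ) (i : Fin d)
    (ξ : ℝ) :
    Vb U₀ a b (x, jumpV ρ v i ξ) = Vb U₀ a b (x, v) *
      exp (b * (((ρ * v i + √(1 - ρ ^ 2) * ξ) ^ 2 - v i ^ 2) / 2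
        - a * (x i / √(1 + ∑ j, x j ^ 2)) * ((ρ * v i + √(1 - ρ ^ 2) * ξ) - v i))) := by
  have hsq := Fintype.sum_apply_update (fun _ y => y ^ 2) v i (ρ * v i + √(1 - ρ ^ 2) * ξ)
  have hdot := Fintype.sum_apply_update (fun j y => x j * y) v i (ρ * v i + √(1 - ρ ^ 2) * ξ)
  simp only [Vb, jumpV, hsq, hdot, ← exp_add]
  congr 1
  ring

lemma jump_exponent_le {ρ s κ v ξ : ℝ} (hs : 0 < s) (hρs : ρ ^ 2 + s ^ 2 = 1) (hκ : |κ| ≤ 1) :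
    ((ρ * v + s * ξ) ^ 2 - v ^ 2) / 2 - κ * ((ρ * v + s * ξ) - v) ≤ ξ ^ 2 + |ξ| + 4 / s ^ 2 := by
  have hρ : |ρ| ≤ 1 := abs_le_one_iff_mul_self_le_one.mpr (by nlinarith)
  have hs1 : s ≤ 1 := by nlinarith
  have hcross : ρ * v * (s * ξ) ≤ s ^ 2 * v ^ 2 / 4 + ρ ^ 2 * ξ ^ 2 := by
    nlinarith [sq_nonneg (s * v - 2 * ρ * ξ)]
  have hdrift : -(κ * ((ρ - 1) * v)) ≤ 2 * |v| := by
    have : |ρ - 1| ≤ 2 := (abs_sub _ _).trans (by norm_num; linarith)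
    calc -(κ * ((ρ - 1) * v)) ≤ |κ| * (|ρ - 1| * |v|) := by
          rw [← abs_mul, ← abs_mul]; exact neg_le_abs _
      _ ≤ 1 * (2 * |v|) := by gcongr
      _ = 2 * |v| := one_mul _
  have hamgm : 2 * |v| ≤ s ^ 2 * v ^ 2 / 4 + 4 / s ^ 2 := by
    have hcancel : s * |v| * (2 / s) = 2 * |v| := by field_simp
    have hsq : (2 / s) ^ 2 = 4 / s ^ 2 := by rw [div_pow]; norm_num
    nlinarith [sq_nonneg (s * |v| / 2 - 2 / s), sq_abs v]
  have hnoise : -(κ * (s * ξ)) ≤ |ξ| := by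
    calc -(κ * (s * ξ)) ≤ |κ * (s * ξ)| := neg_le_abs _
      _ = |κ| * (s * |ξ|) := by rw [abs_mul, abs_mul, abs_of_pos hs]
      _ ≤ 1 * (1 * |ξ|) := by gcongr
      _ = |ξ| := by ring
  nlinarith [sq_nonneg ξ, sq_nonneg s]

lemma Vb_pos {d : ℕ} (U₀ : (Fin d → ℝ) → ℝ) (a b : ℝ) (p : Phase d) : 0 < Vb U₀ a b p :=
  exp_pos _

lemma Vb_jumpV_le {d : ℕ} (U₀ : (Fin d → ℝ) → ℝ) {ρ a b : ℝ} (hρ : ρ ∈ Set.Ioo (-1 : ℝ) 1)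
    (ha : |a| ≤ 1) (hb₀ : 0 ≤ b) (hb : b ≤ 1 / 4) (x v : Fin d → ℝ) (i : Fin d) (ξ : ℝ) :
    Vb U₀ a b (x, jumpV ρ v i ξ)
      ≤ exp (4 / (1 - ρ ^ 2)) * exp (ξ ^ 2 / 4 + |ξ|) * Vb U₀ a b (x, v) := by
  have hσ : 0 < 1 - ρ ^ 2 := by nlinarith [hρ.1, hρ.2]
  have hs : (√(1 - ρ ^ 2)) ^ 2 = 1 - ρ ^ 2 := Real.sq_sqrt hσ.le
  have hκ : |a * (x i / √(1 + ∑ j, x j ^ 2))| ≤ 1 := by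
    rw [abs_mul]
    exact mul_le_one₀ ha (abs_nonneg _) (abs_div_sqrt_one_add_sum_sq_le_one x i)
  have hE := jump_exponent_le (ρ := ρ) (v := v i) (ξ := ξ) (Real.sqrt_pos.mpr hσ)
    (by rw [hs]; ring) hκ
  rw [hs] at hE
  have hK : 0 ≤ 4 / (1 - ρ ^ 2) := by positivity
  rw [Vb_jumpV, mul_comm, ← exp_add]
  refine mul_le_mul_of_nonneg_right (exp_le_exp.mpr ?_) (Vb_pos U₀ a b _).le
  calc _ ≤ b * (ξ ^ 2 + |ξ| + 4 / (1 - ρ ^ 2)) := by gcongr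
    _ ≤ 1 / 4 * (ξ ^ 2 + |ξ| + 4 / (1 - ρ ^ 2)) := by gcongr
    _ ≤ 4 / (1 - ρ ^ 2) + (ξ ^ 2 / 4 + |ξ|) := by linarith [abs_nonneg ξ]

lemma abs_Vb_jumpV_sub_le {d : ℕ} (U₀ : (Fin d → ℝ) → ℝ) {ρ a b : ℝ}
    (hρ : ρ ∈ Set.Ioo (-1 : ℝ) 1) (ha : |a| ≤ 1) (hb₀ : 0 ≤ b) (hb : b ≤ 1 / 4)
    (x v : Fin d → ℝ) (i : Fin d) (ξ : ℝ) :
    |Vb U₀ a b (x, jumpV ρ v i ξ) - Vb U₀ a b (x, v)|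
      ≤ (exp (4 / (1 - ρ ^ 2)) + 1) * exp (ξ ^ 2 / 4 + |ξ|) * Vb U₀ a b (x, v) := by
  have hjump := Vb_jumpV_le U₀ hρ ha hb₀ hb x v i ξ
  have hone : 1 ≤ exp (ξ ^ 2 / 4 + |ξ|) := one_le_exp (by positivity)
  have hV := Vb_pos U₀ a b (x, v)
  have hV' := Vb_pos U₀ a b (x, jumpV ρ v i ξ)
  rw [abs_sub_le_iff]
  constructor <;> nlinarith [exp_pos (4 / (1 - ρ ^ 2))]

lemma abs_jump_sub_le {ρ : ℝ} (hρ : ρ ∈ Set.Icc (-1 : ℝ) 1) (v ξ : ℝ) :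
    |(ρ * v + √(1 - ρ ^ 2) * ξ) - v| ≤ 2 * |v| + |ξ| := by
  have hs : √(1 - ρ ^ 2) ≤ 1 := Real.sqrt_le_one.mpr (by nlinarith)
  have hρ1 : |ρ - 1| ≤ 2 := abs_le.mpr ⟨by linarith [hρ.1], by linarith [hρ.2]⟩
  calc |(ρ * v + √(1 - ρ ^ 2) * ξ) - v| = |(ρ - 1) * v + √(1 - ρ ^ 2) * ξ| := by ring_nf
    _ ≤ |(ρ - 1) * v| + |√(1 - ρ ^ 2) * ξ| := abs_add_le _ _
    _ = |ρ - 1| * |v| + √(1 - ρ ^ 2) * |ξ| := by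
        rw [abs_mul, abs_mul, abs_of_nonneg (Real.sqrt_nonneg _)]
    _ ≤ 2 * |v| + 1 * |ξ| := by gcongr
    _ = 2 * |v| + |ξ| := by ring

lemma apply_jump_increment_le {Ψ : ℝ → ℝ} {MΨ M ρ c : ℝ} (hΨ : Differentiable ℝ Ψ)
    (hΨ₀ : 0 ≤ Ψ 0) (hMΨ : ∀ s, |deriv Ψ s| ≤ MΨ) (hρ : ρ ∈ Set.Icc (-1 : ℝ) 1) (hc : |c| ≤ M)
    (v ξ : ℝ) :
    Ψ (c / 2 * ((ρ * v + √(1 - ρ ^ 2) * ξ) - v)) ≤ (Ψ 0 + MΨ * M) * ((1 + |v|) * (1 + |ξ|)) := by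
  have hMΨ₀ : 0 ≤ MΨ := (abs_nonneg _).trans (hMΨ 0)
  have hM₀ : 0 ≤ M := (abs_nonneg _).trans hc
  have hz : |c / 2 * ((ρ * v + √(1 - ρ ^ 2) * ξ) - v)| ≤ M * ((1 + |v|) * (1 + |ξ|)) :=
    calc _ = |c| / 2 * |(ρ * v + √(1 - ρ ^ 2) * ξ) - v| := by rw [abs_mul, abs_div]; norm_num
      _ ≤ M / 2 * (2 * |v| + |ξ|) := by gcongr; exact abs_jump_sub_le hρ v ξ
      _ ≤ M / 2 * (2 * ((1 + |v|) * (1 + |ξ|))) := by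
          gcongr
          nlinarith [abs_nonneg v, abs_nonneg ξ, mul_nonneg (abs_nonneg v) (abs_nonneg ξ)]
      _ = M * ((1 + |v|) * (1 + |ξ|)) := by ring
  have hone : 1 ≤ (1 + |v|) * (1 + |ξ|) := by nlinarith [abs_nonneg v, abs_nonneg ξ]
  calc _ ≤ Ψ 0 + MΨ * (M * ((1 + |v|) * (1 + |ξ|))) := by
        grw [apply_le_apply_zero_add_mul_abs hΨ hMΨ, hz]
    _ ≤ (Ψ 0 + MΨ * M) * ((1 + |v|) * (1 + |ξ|)) := by nlinarith

lemma exp_sq_div_four_add_abs_mul_le (ξ : ℝ) :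
    exp (ξ ^ 2 / 4 + |ξ|) * (1 + |ξ|) ≤ exp 8 * exp (3 / 8 * ξ ^ 2) :=
  calc exp (ξ ^ 2 / 4 + |ξ|) * (1 + |ξ|) ≤ exp (ξ ^ 2 / 4 + |ξ|) * exp |ξ| := by
        gcongr; linarith [add_one_le_exp |ξ|]
    _ ≤ exp (8 + 3 / 8 * ξ ^ 2) := by
        rw [← exp_add, exp_le_exp]; nlinarith [sq_nonneg (|ξ| - 8), sq_abs ξ]
    _ = exp 8 * exp (3 / 8 * ξ ^ 2) := exp_add _ _

def jumpIntegrand {d : ℕ} (ρ : ℝ) (Ψ : ℝ → ℝ) (U₁ : (Fin d → ℝ) → ℝ) (f : Phase d → ℝ)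
    (p : Phase d) (i : Fin d) (ξ : ℝ) : ℝ :=
  (f (p.1, jumpV ρ p.2 i ξ) - f p)
    * Ψ (pd i U₁ p.1 / 2 * ((ρ * p.2 i + √(1 - ρ ^ 2) * ξ) - p.2 i))

lemma continuous_jumpIntegrand_Vb {d : ℕ} (U₀ U₁ : (Fin d → ℝ) → ℝ) {Ψ : ℝ → ℝ}
    (hΨ : Continuous Ψ) (ρ a b : ℝ) (p : Phase d) (i : Fin d) :
    Continuous (jumpIntegrand ρ Ψ U₁ (Vb U₀ a b) p i) := by
  obtain ⟨x, v⟩ := p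
  unfold jumpIntegrand
  simp only [Vb_jumpV]
  fun_prop

lemma abs_jumpIntegrand_Vb_le {d : ℕ} (U₀ U₁ : (Fin d → ℝ) → ℝ) {Ψ : ℝ → ℝ}
    {ρ a b MΨ M₁ : ℝ} (hρ : ρ ∈ Set.Ioo (-1 : ℝ) 1) (ha : |a| ≤ 1) (hb₀ : 0 ≤ b)
    (hb : b ≤ 1 / 4) (hΨ : Differentiable ℝ Ψ) (hΨpos : ∀ s, 0 ≤ Ψ s)
    (hMΨ : ∀ s, |deriv Ψ s| ≤ MΨ) (hM₁ : ∀ x, ‖fderiv ℝ U₁ x‖ ≤ M₁)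
    (p : Phase d) (i : Fin d) (ξ : ℝ) :
    |jumpIntegrand ρ Ψ U₁ (Vb U₀ a b) p i ξ|
      ≤ (exp (4 / (1 - ρ ^ 2)) + 1) * (Ψ 0 + MΨ * M₁) * exp 8
        * ((1 + √(∑ j, p.2 j ^ 2)) * Vb U₀ a b p) * exp (3 / 8 * ξ ^ 2) := by
  obtain ⟨x, v⟩ := p
  have hΔ := abs_Vb_jumpV_sub_le U₀ hρ ha hb₀ hb x v i ξ
  have hΨz := apply_jump_increment_le hΨ (hΨpos 0) hMΨ ⟨hρ.1.le, hρ.2.le⟩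
    ((abs_pd_le_norm_fderiv i U₁ x).trans (hM₁ x)) (v i) ξ
  have hA : 0 ≤ Ψ 0 + MΨ * M₁ := add_nonneg (hΨpos 0)
    (mul_nonneg ((abs_nonneg _).trans (hMΨ 0)) ((norm_nonneg _).trans (hM₁ x)))
  have hV := Vb_pos U₀ a b (x, v)
  rw [jumpIntegrand, abs_mul, abs_of_nonneg (hΨpos _)]
  calc _ ≤ (exp (4 / (1 - ρ ^ 2)) + 1) * exp (ξ ^ 2 / 4 + |ξ|) * Vb U₀ a b (x, v)
        * ((Ψ 0 + MΨ * M₁) * ((1 + |v i|) * (1 + |ξ|))) :=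
        mul_le_mul hΔ hΨz (hΨpos _) (by positivity)
    _ = (exp (4 / (1 - ρ ^ 2)) + 1) * (Ψ 0 + MΨ * M₁) * ((1 + |v i|) * Vb U₀ a b (x, v))
        * (exp (ξ ^ 2 / 4 + |ξ|) * (1 + |ξ|)) := by ring
    _ ≤ (exp (4 / (1 - ρ ^ 2)) + 1) * (Ψ 0 + MΨ * M₁)
        * ((1 + √(∑ j, v j ^ 2)) * Vb U₀ a b (x, v)) * (exp 8 * exp (3 / 8 * ξ ^ 2)) := by
        gcongr _ * _ * ((1 + ?_) * _) * ?_
        · exact abs_le_sqrt_sum_sq v i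
        · exact exp_sq_div_four_add_abs_mul_le ξ
    _ = _ := by ring

theorem jump_adjoint_lyapunov_bound_general {d : ℕ}
    (U₀ U₁ : (Fin d → ℝ) → ℝ)
    (hU₁bd : ∀ n : ℕ, 1 ≤ n → ∃ M : ℝ, ∀ x, ‖iteratedFDeriv ℝ n U₁ x‖ ≤ M)
    (ρ : ℝ) (hρ : ρ ∈ Set.Ioo (-1 : ℝ) 1)
    (Ψ : ℝ → ℝ) (hΨ : ContDiff ℝ (⊤ : ℕ∞) Ψ) (hΨpos : ∀ s, 0 ≤ Ψ s)
    (hΨbd : ∀ n : ℕ, 1 ≤ n → ∃ M : ℝ, ∀ s, |iteratedDeriv n Ψ s| ≤ M) :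
    ∃ a₀ : ℝ, 0 < a₀ ∧ ∃ b₀ ∈ Set.Ioo (0 : ℝ) 1,
      ∀ a ∈ Set.Ioo (0 : ℝ) a₀, ∀ b ∈ Set.Ioo (0 : ℝ) b₀,
        ∃ C : ℝ, 0 < C ∧
          (∀ (p : Phase d) (i : Fin d),
            Integrable (fun ξ => (Vb U₀ a b (p.1, jumpV ρ p.2 i ξ) - Vb U₀ a b p)
              * Ψ (pd i U₁ p.1 / 2 * ((ρ * p.2 i + Real.sqrt (1 - ρ ^ 2) * ξ) - p.2 i)))
              (gaussianReal 0 1)) ∧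
          ∀ p : Phase d,
            L2star ρ Ψ U₁ (Vb U₀ a b) p
              ≤ C * (1 + Real.sqrt (∑ i, p.2 i ^ 2)) * Vb U₀ a b p := by
  obtain ⟨MΨ, hMΨ⟩ := hΨbd 1 le_rfl
  obtain ⟨M₁, hM₁⟩ := hU₁bd 1 le_rfl
  simp only [iteratedDeriv_one, norm_iteratedFDeriv_one] at hMΨ hM₁
  have hΨdiff : Differentiable ℝ Ψ := hΨ.differentiable (by simp)
  refine ⟨1, one_pos, 1 / 4, by norm_num, fun a ha b hb => ?_⟩
  have ha' : |a| ≤ 1 := abs_le.mpr ⟨by linarith [ha.1], ha.2.le⟩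
  set K := (exp (4 / (1 - ρ ^ 2)) + 1) * (Ψ 0 + MΨ * M₁) * exp 8
  have hdom := abs_jumpIntegrand_Vb_le U₀ U₁ hρ ha' hb.1.le hb.2.le hΨdiff hΨpos hMΨ hM₁
  have hg := integrable_exp_mul_sq_gaussianReal (c := 3 / 8) (by norm_num)
  have hint : ∀ p i, Integrable (jumpIntegrand ρ Ψ U₁ (Vb U₀ a b) p i) (gaussianReal 0 1) :=
    fun p i => (hg.const_mul _).mono' (continuous_jumpIntegrand_Vb U₀ U₁ hΨ.continuous ρ a b p i
      |>.aestronglyMeasurable) (ae_of_all _ (hdom p i))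
  refine ⟨max 1 (2 / (1 - ρ) * d * K * ∫ ξ, exp (3 / 8 * ξ ^ 2) ∂gaussianReal 0 1),
    lt_max_of_lt_left one_pos, hint, fun p => ?_⟩
  have hρ₁ : 0 < 1 - ρ := by linarith [hρ.2]
  calc L2star ρ Ψ U₁ (Vb U₀ a b) p
      = 2 / (1 - ρ) * ∑ i, ∫ ξ, jumpIntegrand ρ Ψ U₁ (Vb U₀ a b) p i ξ ∂gaussianReal 0 1 := rfl
    _ ≤ 2 / (1 - ρ) * ∑ _i : Fin d, ∫ ξ, K * ((1 + √(∑ j, p.2 j ^ 2)) * Vb U₀ a b p)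
          * exp (3 / 8 * ξ ^ 2) ∂gaussianReal 0 1 := by
        refine mul_le_mul_of_nonneg_left (Finset.sum_le_sum fun i _ => ?_) (by positivity)
        exact integral_mono (hint p i) (hg.const_mul _) fun ξ => (le_abs_self _).trans (hdom p i ξ)
    _ = (2 / (1 - ρ) * d * K * ∫ ξ, exp (3 / 8 * ξ ^ 2) ∂gaussianReal 0 1)
          * ((1 + √(∑ j, p.2 j ^ 2)) * Vb U₀ a b p) := by
        rw [integral_const_mul, Finset.sum_const, Finset.card_univ, Fintype.card_fin,
          nsmul_eq_mul]
        ring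
    _ ≤ _ := by
        rw [mul_assoc _ (1 + _)]
        gcongr
        · exact mul_nonneg (by positivity) (Vb_pos U₀ a b p).le
        · exact le_max_right _ _

/-- For `a > 0` and `b ∈ (0,1)` small enough there exists `C > 0`
with `L₂* V_b ≤ C (1 + |v|) V_b` everywhere; in particular the Gaussian expectations
defining `L₂* V_b` are finite. -/
theorem jump_adjoint_lyapunov_bound {d : ℕ}
    (U₀ U₁ : (Fin d → ℝ) → ℝ)
    (hU₀ : ContDiff ℝ (⊤ : ℕ∞) U₀) (hU₁ : ContDiff ℝ (⊤ : ℕ∞) U₁)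
    (hU₁bd : ∀ n : ℕ, 1 ≤ n → ∃ M : ℝ, ∀ x, ‖iteratedFDeriv ℝ n U₁ x‖ ≤ M)
    (ρ : ℝ) (hρ : ρ ∈ Set.Ioo (-1 : ℝ) 1)
    (Ψ : ℝ → ℝ) (hΨ : ContDiff ℝ (⊤ : ℕ∞) Ψ) (hΨpos : ∀ s, 0 ≤ Ψ s)
    (hΨbd : ∀ n : ℕ, 1 ≤ n → ∃ M : ℝ, ∀ s, |iteratedDeriv n Ψ s| ≤ M)
    (hΨeq : ∀ s, Ψ s - Ψ (-s) = s) :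
    ∃ a₀ : ℝ, 0 < a₀ ∧ ∃ b₀ ∈ Set.Ioo (0 : ℝ) 1,
      ∀ a ∈ Set.Ioo (0 : ℝ) a₀, ∀ b ∈ Set.Ioo (0 : ℝ) b₀,
        ∃ C : ℝ, 0 < C ∧
          (∀ (p : Phase d) (i : Fin d),
            Integrable (fun ξ => (Vb U₀ a b (p.1, jumpV ρ p.2 i ξ) - Vb U₀ a b p)
              * Ψ (pd i U₁ p.1 / 2 * ((ρ * p.2 i + Real.sqrt (1 - ρ ^ 2) * ξ) - p.2 i)))
              (gaussianReal 0 1)) ∧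
          ∀ p : Phase d,
            L2star ρ Ψ U₁ (Vb U₀ a b) p
              ≤ C * (1 + Real.sqrt (∑ i, p.2 i ^ 2)) * Vb U₀ a b p :=
  jump_adjoint_lyapunov_bound_general U₀ U₁ hU₁bd ρ hρ Ψ hΨ hΨpos hΨbd
end
end

section
/- Suppose Ψ : ℝ → [0,∞) has bounded first derivative and |∂_i U₁(x)| ≤ M_i for all x. Then the jump rate λ_i(x,v) = (2/(1−ρ)) E[Ψ((∂_i U₁(x)/2)(v_i − Vⁱ_i))] satisfies, for all (x,v), λ_i(x,v) ≤ (1/(1−ρ)) ( 2Ψ(0) + ‖Ψ'‖_∞ M_i ( (1−ρ)|v_i| + √(2(1−ρ²)/π) ) ). -/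
open MeasureTheory ProbabilityTheory Real

noncomputable section

/-! Because `|Ψ'| ≤ MΨ`, `Ψ` grows at most linearly: `Ψ t ≤ Ψ 0 + MΨ |t|`. The argument of `Ψ` is
the affine function `(∂ᵢU₁(x)/2)((1 - ρ) vᵢ - √(1 - ρ²) ξ)` of the standard Gaussian `ξ`, so taking
expectations and using `E|ξ| = √(2/π)` gives the bound. -/

open Set

lemma integral_Ioi_mul_exp_neg_sq_div_two : ∫ x in Ioi (0 : ℝ), x * exp (-x ^ 2 / 2) = 1 := by
  have h := integral_mul_cexp_neg_mul_sq (b := 1 / 2) (by norm_num)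
  norm_num at h
  have : ∫ x in Ioi (0 : ℝ), ((x * exp (-x ^ 2 / 2) : ℝ) : ℂ) = 1 := by
    rw [← h]; congr 1 with x; push_cast; ring_nf
  exact_mod_cast integral_complex_ofReal.symm.trans this

lemma integral_abs_gaussianReal : ∫ x, |x| ∂gaussianReal 0 1 = √(2 / π) := by
  rw [integral_gaussianReal_eq_integral_smul one_ne_zero]
  simp only [gaussianPDFReal, smul_eq_mul, NNReal.coe_one, mul_one, sub_zero]
  have h := integral_comp_abs (f := fun x ↦ (√(2 * π))⁻¹ * exp (-x ^ 2 / 2) * x)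
  simp only [sq_abs] at h
  rw [h]
  simp_rw [mul_assoc, integral_const_mul, mul_comm (exp _), integral_Ioi_mul_exp_neg_sq_div_two]
  rw [sqrt_div' _ pi_pos.le, sqrt_mul' _ pi_pos.le]
  field_simp
  rw [sq_sqrt zero_le_two]

lemma LipschitzWith.integral_comp_affine_gaussianReal_le {Ψ : ℝ → ℝ} {K : NNReal}
    (hΨ : LipschitzWith K Ψ) (a b : ℝ) :
    ∫ ξ, Ψ (a + b * ξ) ∂gaussianReal 0 1 ≤ Ψ 0 + K * (|a| + |b| * √(2 / π)) := by
  have hgrowth (ξ : ℝ) : |Ψ (a + b * ξ) - Ψ 0| ≤ K * (|a| + |b| * |ξ|) := by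
    have := abs_add_le a (b * ξ)
    have := hΨ.dist_le_mul (a + b * ξ) 0
    rw [Real.dist_eq, Real.dist_eq, sub_zero, abs_mul] at *
    nlinarith [K.coe_nonneg]
  have habs : Integrable (fun ξ : ℝ ↦ |ξ|) (gaussianReal 0 1) :=
    (memLp_id_gaussianReal 1).integrable le_rfl |>.abs
  have hbound : Integrable (fun ξ ↦ K * (|a| + |b| * |ξ|)) (gaussianReal 0 1) :=
    ((integrable_const _).add (habs.const_mul _)).const_mul _
  have hcomp : Integrable (fun ξ ↦ Ψ (a + b * ξ)) (gaussianReal 0 1) := by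
    refine ((integrable_const |Ψ 0|).add hbound).mono'
      (hΨ.continuous.comp (by fun_prop)).aestronglyMeasurable (ae_of_all _ fun ξ ↦ ?_)
    rw [Real.norm_eq_abs, Pi.add_apply]
    linarith [hgrowth ξ, abs_sub_abs_le_abs_sub (Ψ (a + b * ξ)) (Ψ 0)]
  calc ∫ ξ, Ψ (a + b * ξ) ∂gaussianReal 0 1
      ≤ ∫ ξ, Ψ 0 + K * (|a| + |b| * |ξ|) ∂gaussianReal 0 1 :=
        integral_mono hcomp ((integrable_const _).add hbound)
          fun ξ ↦ by linarith [(abs_le.mp (hgrowth ξ)).2]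
    _ = Ψ 0 + K * (|a| + |b| * √(2 / π)) := by
        rw [integral_add (integrable_const _) hbound, integral_const_mul,
          integral_add (integrable_const _) (habs.const_mul _), integral_const_mul,
          integral_const, integral_const, integral_abs_gaussianReal]
        simp

theorem jump_rate_bound_general {d : ℕ}
    (U₁ : (Fin d → ℝ) → ℝ)
    (ρ : ℝ) (hρ : ρ ∈ Set.Ico (-1 : ℝ) 1)
    (Ψ : ℝ → ℝ) (hΨdiff : Differentiable ℝ Ψ)
    (MΨ : ℝ) (hMΨ : ∀ s, |deriv Ψ s| ≤ MΨ)
    (i : Fin d) (Mi : ℝ) (hMi : ∀ x, |pd i U₁ x| ≤ Mi) :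
    ∀ x v : Fin d → ℝ,
      (2 / (1 - ρ)) * ∫ ξ, Ψ (pd i U₁ x / 2
            * (v i - (ρ * v i + Real.sqrt (1 - ρ ^ 2) * ξ))) ∂(gaussianReal 0 1)
        ≤ (1 / (1 - ρ)) * (2 * Ψ 0
            + MΨ * Mi * ((1 - ρ) * |v i| + Real.sqrt (2 * (1 - ρ ^ 2) / π))) := by
  intro x v
  have hρ1 : 0 < 1 - ρ := sub_pos.mpr hρ.2
  have hMΨ0 : 0 ≤ MΨ := (abs_nonneg _).trans (hMΨ 0)
  have hΨ : LipschitzWith MΨ.toNNReal Ψ := lipschitzWith_of_nnnorm_deriv_le hΨdiff fun t ↦ by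
    rw [← NNReal.coe_le_coe, Real.coe_toNNReal _ hMΨ0, coe_nnnorm, Real.norm_eq_abs]
    exact hMΨ t
  set c := pd i U₁ x
  set s := √(1 - ρ ^ 2)
  have hs : 0 ≤ s := sqrt_nonneg _
  calc 2 / (1 - ρ) * ∫ ξ, Ψ (c / 2 * (v i - (ρ * v i + s * ξ))) ∂gaussianReal 0 1
      = 2 / (1 - ρ) * ∫ ξ, Ψ (c / 2 * (1 - ρ) * v i + (-(c / 2 * s)) * ξ) ∂gaussianReal 0 1 := by
        congr 2 with ξ; ring_nf
    _ ≤ 2 / (1 - ρ) * (Ψ 0 + MΨ * (|c / 2 * (1 - ρ) * v i| + |-(c / 2 * s)| * √(2 / π))) := by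
        gcongr
        simpa only [Real.coe_toNNReal _ hMΨ0] using hΨ.integral_comp_affine_gaussianReal_le _ _
    _ ≤ 2 / (1 - ρ) * (Ψ 0 + MΨ * (Mi / 2 * (1 - ρ) * |v i| + Mi / 2 * s * √(2 / π))) := by
        have hc : |c| ≤ Mi := hMi x
        simp only [abs_neg, abs_mul, abs_div, abs_two, abs_of_pos hρ1, abs_of_nonneg hs]
        gcongr
    _ = 1 / (1 - ρ) * (2 * Ψ 0 + MΨ * Mi * ((1 - ρ) * |v i| + √(2 * (1 - ρ ^ 2) / π))) := by
        rw [show 2 * (1 - ρ ^ 2) / π = (1 - ρ ^ 2) * (2 / π) by ring,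
          sqrt_mul' _ (div_nonneg zero_le_two pi_pos.le)]
        field_simp
        ring

/-- thinning bound on the jump rate. If `|Ψ'| ≤ MΨ` and
`|∂ᵢU₁| ≤ Mᵢ`, then the jump rate
`λᵢ(x,v) = (2/(1−ρ)) E[Ψ((∂ᵢU₁(x)/2)(vᵢ − Vⁱᵢ))]` satisfies
`λᵢ(x,v) ≤ (1/(1−ρ))(2Ψ(0) + MΨ Mᵢ ((1−ρ)|vᵢ| + √(2(1−ρ²)/π)))`. -/
theorem jump_rate_bound {d : ℕ}
    (U₁ : (Fin d → ℝ) → ℝ) (hU₁ : ContDiff ℝ (⊤ : ℕ∞) U₁)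
    (ρ : ℝ) (hρ : ρ ∈ Set.Ico (-1 : ℝ) 1)
    (Ψ : ℝ → ℝ) (hΨdiff : Differentiable ℝ Ψ) (hΨpos : ∀ s, 0 ≤ Ψ s)
    (MΨ : ℝ) (hMΨ : ∀ s, |deriv Ψ s| ≤ MΨ)
    (i : Fin d) (Mi : ℝ) (hMi : ∀ x, |pd i U₁ x| ≤ Mi) :
    ∀ x v : Fin d → ℝ,
      (2 / (1 - ρ)) * ∫ ξ, Ψ (pd i U₁ x / 2
            * (v i - (ρ * v i + Real.sqrt (1 - ρ ^ 2) * ξ))) ∂(gaussianReal 0 1)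
        ≤ (1 / (1 - ρ)) * (2 * Ψ 0
            + MΨ * Mi * ((1 - ρ) * |v i| + Real.sqrt (2 * (1 - ρ ^ 2) / π))) :=
  jump_rate_bound_general U₁ ρ hρ Ψ hΨdiff MΨ hMΨ i Mi hMi
end
end

section
/- Let γ > 0. There exists δ₀ > 0 (independent of b) such that for every b ∈ (0,1/2) there exist constants C₁, C₂ > 0 with, for all 0 < δ ≤ δ₀ and all v ∈ ℝ^d, E[exp(b|e^{−γδ} v + √(1 − e^{−2γδ}) ξ|²)] ≤ (1 + C₂ δ) exp(b(1 − C₁ δ)|v|²), where ξ is a standard Gaussian vector in ℝ^d. -/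
/-!
The coordinates of `ξ` are independent, so the expectation factorizes, and each factor is a
one-dimensional Gaussian integral computed by completing the square: with `a = e^{-γδ}`,
`s² = 1 - a²` and `A = 1 - 2bs²` it equals `A^{-d/2} exp (b a² |v|² / A)`. Since `2b < 1` we
have `A ≥ a²`, so the prefactor is at most `a^{-d} = e^{dγδ} ≤ 1 + C₂δ`; and
`a² / A = (1 - s²) / (1 - 2bs²) ≤ 1 - (1 - 2b)s²` with `s² ≥ γδ` as long as `2γδ ≤ 1`,
which gives `C₁ = (1 - 2b)γ`.
-/

open MeasureTheory ProbabilityTheory Real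

noncomputable section

lemma integral_exp_mul_sq_add_mul_gaussianReal {b s : ℝ} (w : ℝ) (h : 2 * b * s ^ 2 < 1) :
    ∫ x, exp (b * (w + s * x) ^ 2) ∂(gaussianReal 0 1)
      = (√(1 - 2 * b * s ^ 2))⁻¹ * exp (b * w ^ 2 / (1 - 2 * b * s ^ 2)) := by
  set A := 1 - 2 * b * s ^ 2
  have hA : 0 < A := by simp only [A]; linarith
  have complete_sq : ∀ x : ℝ, gaussianPDFReal 0 1 x • exp (b * (w + s * x) ^ 2)
      = (√(2 * π))⁻¹ * exp (b * w ^ 2 / A) * exp (-(A / 2) * (x - 2 * b * w * s / A) ^ 2) := by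
    intro x
    simp only [gaussianPDFReal, smul_eq_mul, NNReal.coe_one, mul_one, sub_zero]
    rw [mul_assoc, mul_assoc, ← exp_add, ← exp_add]
    congr 2
    field_simp
    ring
  rw [integral_gaussianReal_eq_integral_smul one_ne_zero]
  simp_rw [complete_sq]
  rw [integral_const_mul, integral_sub_right_eq_self (fun x => exp (-(A / 2) * x ^ 2)),
    integral_gaussian, show π / (A / 2) = 2 * π / A by field_simp,
    sqrt_div (by positivity)]
  field_simp

lemma integral_exp_mul_sum_sq_pi_gaussianReal {ι : Type*} [Fintype ι] {b s : ℝ} (a : ℝ)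
    (v : ι → ℝ) (h : 2 * b * s ^ 2 < 1) :
    ∫ ξ : ι → ℝ, exp (b * ∑ i, (a * v i + s * ξ i) ^ 2) ∂(Measure.pi fun _ => gaussianReal 0 1)
      = (√(1 - 2 * b * s ^ 2))⁻¹ ^ Fintype.card ι
        * exp (b * a ^ 2 / (1 - 2 * b * s ^ 2) * ∑ i, v i ^ 2) := by
  simp_rw [Finset.mul_sum, exp_sum]
  rw [integral_fintype_prod_eq_prod (fun i x => exp (b * (a * v i + s * x) ^ 2))]
  simp_rw [integral_exp_mul_sq_add_mul_gaussianReal _ h]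
  rw [Finset.prod_mul_distrib, Finset.prod_const, Finset.card_univ]
  congr 1
  exact Finset.prod_congr rfl fun i _ => by ring_nf

lemma div_one_sub_mul_le_one_sub_mul {b t : ℝ} (hb₀ : 0 ≤ b) (hb : 2 * b ≤ 1) (ht : 2 * b * t < 1) :
    (1 - t) / (1 - 2 * b * t) ≤ 1 - (1 - 2 * b) * t := by
  rw [div_le_iff₀ (by linarith)]
  nlinarith [mul_nonneg (mul_nonneg hb₀ (sub_nonneg.2 hb)) (sq_nonneg t)]

lemma integral_exp_mul_sum_sq_pi_gaussianReal_le {ι : Type*} [Fintype ι] {a b : ℝ} (ha₀ : 0 < a)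
    (ha : a ≤ 1) (hb₀ : 0 ≤ b) (hb : 2 * b ≤ 1) (v : ι → ℝ) :
    ∫ ξ : ι → ℝ, exp (b * ∑ i, (a * v i + √(1 - a ^ 2) * ξ i) ^ 2)
        ∂(Measure.pi fun _ => gaussianReal 0 1)
      ≤ a⁻¹ ^ Fintype.card ι * exp (b * (1 - (1 - 2 * b) * (1 - a ^ 2)) * ∑ i, v i ^ 2) := by
  have hs : √(1 - a ^ 2) ^ 2 = 1 - a ^ 2 := sq_sqrt (by nlinarith)
  have hA : a ^ 2 ≤ 1 - 2 * b * (1 - a ^ 2) := by nlinarith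
  have hA₀ : 0 < 1 - 2 * b * (1 - a ^ 2) := lt_of_lt_of_le (by positivity) hA
  rw [integral_exp_mul_sum_sq_pi_gaussianReal a v (by rw [hs]; linarith), hs]
  gcongr
  · calc √(1 - 2 * b * (1 - a ^ 2)) ≥ √(a ^ 2) := sqrt_le_sqrt hA
      _ = a := sqrt_sq ha₀.le
  · rw [mul_div_assoc]
    gcongr
    have key := div_one_sub_mul_le_one_sub_mul hb₀ hb (t := 1 - a ^ 2) (by linarith)
    rwa [sub_sub_cancel] at key

lemma Real.half_le_one_sub_exp_neg {x : ℝ} (hx₀ : 0 ≤ x) (hx : x ≤ 1) : x / 2 ≤ 1 - exp (-x) := by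
  have h := add_one_le_exp x
  have h' : exp (-x) * exp x = 1 := by rw [← exp_add, neg_add_cancel, exp_zero]
  nlinarith [exp_pos (-x)]

lemma Real.exp_mul_le_one_add_mul {c δ δ₀ : ℝ} (hc : 0 ≤ c) (hδ : 0 ≤ δ) (hδ₀ : δ ≤ δ₀) :
    exp (c * δ) ≤ 1 + c * exp (c * δ₀) * δ := by
  -- `1 - cδ ≤ exp (-cδ)`, multiplied by `exp (cδ)`
  have h := add_one_le_exp (-(c * δ))
  have h' : exp (-(c * δ)) * exp (c * δ) = 1 := by rw [← exp_add, neg_add_cancel, exp_zero]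
  have hmono : exp (c * δ) ≤ exp (c * δ₀) := exp_le_exp.2 (by gcongr)
  nlinarith [exp_pos (c * δ), mul_nonneg hc hδ]

/-- Lemma on the O-step of the splitting scheme. For `γ > 0` there
exists `δ₀ > 0` (independent of `b`) such that for every `b ∈ (0,1/2)` there are
`C₁, C₂ > 0` with, for all `0 < δ ≤ δ₀` and all `v ∈ ℝ^d`,
`E[exp(b|e^{−γδ}v + √(1−e^{−2γδ})ξ|²)] ≤ (1 + C₂δ) exp(b(1 − C₁δ)|v|²)`. -/
theorem O_step_lyapunov (d : ℕ) (γ : ℝ) (hγ : 0 < γ) :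
    ∃ δ₀ : ℝ, 0 < δ₀ ∧ ∀ b ∈ Set.Ioo (0 : ℝ) (1 / 2),
      ∃ C₁ : ℝ, 0 < C₁ ∧ ∃ C₂ : ℝ, 0 < C₂ ∧
        ∀ δ : ℝ, 0 < δ → δ ≤ δ₀ → ∀ v : Fin d → ℝ,
          ∫ ξ : Fin d → ℝ,
              Real.exp (b * ∑ i, (Real.exp (-γ * δ) * v i
                + Real.sqrt (1 - Real.exp (-2 * γ * δ)) * ξ i) ^ 2)
              ∂(Measure.pi fun _ : Fin d => gaussianReal 0 1)
            ≤ (1 + C₂ * δ) * Real.exp (b * (1 - C₁ * δ) * ∑ i, v i ^ 2) := by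
  refine ⟨1 / (2 * γ), by positivity, fun b ⟨hb₀, hb⟩ => ?_⟩
  refine ⟨(1 - 2 * b) * γ, by nlinarith, d * γ * exp (d * γ * (1 / (2 * γ))) + 1, by positivity, ?_⟩
  intro δ hδ hδ₀ v
  have hγδ : 2 * γ * δ ≤ 1 := by rwa [le_div_iff₀ (by positivity), mul_comm] at hδ₀
  have hsq : exp (-2 * γ * δ) = exp (-γ * δ) ^ 2 := by rw [← exp_nat_mul]; ring_nf
  have hdecay : γ * δ ≤ 1 - exp (-γ * δ) ^ 2 := by
    rw [← hsq, show -2 * γ * δ = -(2 * γ * δ) by ring]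
    linarith [half_le_one_sub_exp_neg (x := 2 * γ * δ) (by positivity) hγδ]
  rw [hsq]
  refine (integral_exp_mul_sum_sq_pi_gaussianReal_le (exp_pos _)
    (exp_le_one_iff.2 (by nlinarith)) hb₀.le (by linarith) v).trans ?_
  gcongr ?_ * exp (b * (1 - ?_) * _)
  · rw [Fintype.card_fin, ← exp_neg, ← exp_nat_mul]
    calc exp (d * -(-γ * δ)) = exp (d * γ * δ) := by ring_nf
      _ ≤ 1 + d * γ * exp (d * γ * (1 / (2 * γ))) * δ :=
        exp_mul_le_one_add_mul (by positivity) hδ.le hδ₀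
      _ ≤ _ := by nlinarith
  · nlinarith
end
end

section
/- Let ρ ∈ (−1,1), b ∈ (0,1/2), and set α = ρ²/(1 − 2b(1 − ρ²)); note α < 1. Then there exists a constant C > 0 such that for all w ∈ ℝ, E[ exp(b(ρw + √(1−ρ²) ξ)²) (1 + |(1−ρ)w + √(1−ρ²) ξ|) ] ≤ C (1 + |w|) exp(b α w²), where ξ is a standard one-dimensional Gaussian; in particular the expectation is finite and grows strictly slower than exp(b w²) as |w| → ∞. -/
/-!
With `s = √(1 - ρ²)`, multiplying the standard Gaussian density by `exp (b (ρ w + s ξ)²)` and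
completing the square in `ξ` gives `exp (b α w²)` times an unnormalised Gaussian density of
precision `a = 1 - 2 b s² > 0` centred at `μ = 2 b ρ s w / a`. Writing
`(1 - ρ) w + s ξ = c w + s (ξ - μ)`, the remaining factor `1 + |c w + s (ξ - μ)|` integrates
against that density to at most a constant times `1 + |w|`.
-/

open MeasureTheory ProbabilityTheory Real

section GaussianWeight

variable {a : ℝ}

lemma integrable_abs_mul_exp_neg_mul_sq (ha : 0 < a) :
    Integrable fun u : ℝ => |u| * exp (-a * u ^ 2) :=
  (integrable_mul_exp_neg_mul_sq ha).abs.congr <| ae_of_all _ fun u => by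
    simp only [abs_mul, abs_of_pos (exp_pos _)]

lemma exp_neg_mul_sq_mul_one_add_abs_le (p q u : ℝ) :
    exp (-a * u ^ 2) * (1 + |p + q * u|)
      ≤ (1 + |p|) * exp (-a * u ^ 2) + |q| * (|u| * exp (-a * u ^ 2)) := by
  have h : |p + q * u| ≤ |p| + |q| * |u| := (abs_add_le _ _).trans_eq (by rw [abs_mul])
  nlinarith [mul_le_mul_of_nonneg_left h (exp_pos (-a * u ^ 2)).le]

lemma integrable_exp_neg_mul_sq_mul_one_add_abs (ha : 0 < a) (p q : ℝ) :
    Integrable fun u : ℝ => exp (-a * u ^ 2) * (1 + |p + q * u|) :=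
  (((integrable_exp_neg_mul_sq ha).const_mul _).add
      ((integrable_abs_mul_exp_neg_mul_sq ha).const_mul _)).mono'
    (by fun_prop) <| ae_of_all _ fun u => by
      rw [norm_of_nonneg (by positivity)]
      exact exp_neg_mul_sq_mul_one_add_abs_le p q u

lemma integral_exp_neg_mul_sq_mul_one_add_abs_le (ha : 0 < a) (p q : ℝ) :
    ∫ u, exp (-a * u ^ 2) * (1 + |p + q * u|)
      ≤ (1 + |p|) * √(π / a) + |q| * ∫ u, |u| * exp (-a * u ^ 2) := by
  have h₀ := (integrable_exp_neg_mul_sq ha).const_mul (1 + |p|)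
  have h₁ := (integrable_abs_mul_exp_neg_mul_sq ha).const_mul |q|
  calc ∫ u, exp (-a * u ^ 2) * (1 + |p + q * u|)
      ≤ ∫ u, ((1 + |p|) * exp (-a * u ^ 2) + |q| * (|u| * exp (-a * u ^ 2))) :=
        integral_mono (integrable_exp_neg_mul_sq_mul_one_add_abs ha p q) (h₀.add h₁)
          (exp_neg_mul_sq_mul_one_add_abs_le p q)
    _ = (1 + |p|) * √(π / a) + |q| * ∫ u, |u| * exp (-a * u ^ 2) := by
        rw [integral_add h₀ h₁, integral_const_mul, integral_const_mul, integral_gaussian]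

end GaussianWeight

lemma integrable_gaussianReal_iff {μ : ℝ} {v : NNReal} (hv : v ≠ 0) {f : ℝ → ℝ} :
    Integrable f (gaussianReal μ v) ↔ Integrable fun x => gaussianPDFReal μ v x * f x := by
  rw [gaussianReal_of_var_ne_zero _ hv, integrable_withDensity_iff (measurable_gaussianPDF _ _)
    (ae_of_all _ fun _ => gaussianPDF_lt_top)]
  simp only [gaussianPDF_def, ENNReal.toReal_ofReal (gaussianPDFReal_nonneg _ _ _), mul_comm]

lemma gaussianPDFReal_zero_one_apply (x : ℝ) :
    gaussianPDFReal 0 1 x = (√(2 * π))⁻¹ * exp (-x ^ 2 / 2) := by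
  simp [gaussianPDFReal]

lemma neg_sq_div_two_add_mul_sq {b ρ s w ξ : ℝ} (ha : 1 - 2 * b * s ^ 2 ≠ 0) :
    -ξ ^ 2 / 2 + b * (ρ * w + s * ξ) ^ 2
      = b * (ρ ^ 2 / (1 - 2 * b * s ^ 2)) * w ^ 2
        + -((1 - 2 * b * s ^ 2) / 2) * (ξ - 2 * b * ρ * s * w / (1 - 2 * b * s ^ 2)) ^ 2 := by
  field_simp
  ring

section TiltedGaussian

variable {a b ρ s η : ℝ}

lemma gaussianPDFReal_mul_exp_mul_sq (ha : a ≠ 0) (hab : 1 - 2 * b * s ^ 2 = a) (w ξ : ℝ) :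
    gaussianPDFReal 0 1 ξ * exp (b * (ρ * w + s * ξ) ^ 2)
      = (√(2 * π))⁻¹ * exp (b * (ρ ^ 2 / a) * w ^ 2)
        * exp (-(a / 2) * (ξ - 2 * b * ρ * s * w / a) ^ 2) := by
  subst hab
  rw [gaussianPDFReal_zero_one_apply, mul_assoc, ← exp_add, neg_sq_div_two_add_mul_sq ha, exp_add]
  ring

lemma gaussianPDFReal_mul_tilted_eq (ha : a ≠ 0) (hab : 1 - 2 * b * s ^ 2 = a) (w ξ : ℝ) :
    gaussianPDFReal 0 1 ξ * (exp (b * (ρ * w + s * ξ) ^ 2) * (1 + |η * w + s * ξ|))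
      = (√(2 * π))⁻¹ * exp (b * (ρ ^ 2 / a) * w ^ 2)
        * (exp (-(a / 2) * (ξ - 2 * b * ρ * s * w / a) ^ 2)
          * (1 + |(η + 2 * b * ρ * s ^ 2 / a) * w + s * (ξ - 2 * b * ρ * s * w / a)|)) := by
  have hlinear : η * w + s * ξ
      = (η + 2 * b * ρ * s ^ 2 / a) * w + s * (ξ - 2 * b * ρ * s * w / a) := by
    field_simp
    ring
  rw [← mul_assoc, gaussianPDFReal_mul_exp_mul_sq ha hab, hlinear, mul_assoc]

theorem integrable_tilted_gaussianReal (ha : 0 < a) (hab : 1 - 2 * b * s ^ 2 = a) (w : ℝ) :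
    Integrable (fun ξ => exp (b * (ρ * w + s * ξ) ^ 2) * (1 + |η * w + s * ξ|))
      (gaussianReal 0 1) := by
  rw [integrable_gaussianReal_iff one_ne_zero]
  simp_rw [gaussianPDFReal_mul_tilted_eq ha.ne' hab]
  exact ((integrable_exp_neg_mul_sq_mul_one_add_abs (half_pos ha) _ s).comp_sub_right _).const_mul _

theorem integral_tilted_gaussianReal_le (ha : 0 < a) (hab : 1 - 2 * b * s ^ 2 = a) (w : ℝ) :
    ∫ ξ, exp (b * (ρ * w + s * ξ) ^ 2) * (1 + |η * w + s * ξ|) ∂gaussianReal 0 1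
      ≤ (√(2 * π))⁻¹ * exp (b * (ρ ^ 2 / a) * w ^ 2)
        * ((1 + |(η + 2 * b * ρ * s ^ 2 / a) * w|) * √(π / (a / 2))
          + |s| * ∫ u, |u| * exp (-(a / 2) * u ^ 2)) := by
  rw [integral_gaussianReal_eq_integral_smul one_ne_zero]
  simp_rw [smul_eq_mul, gaussianPDFReal_mul_tilted_eq ha.ne' hab]
  rw [integral_const_mul, integral_sub_right_eq_self
    (fun u => exp (-(a / 2) * u ^ 2) * (1 + |(η + 2 * b * ρ * s ^ 2 / a) * w + s * u|))]
  gcongr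
  exact integral_exp_neg_mul_sq_mul_one_add_abs_le (half_pos ha) _ _

end TiltedGaussian

/-- Let `ρ ∈ (−1,1)`, `b ∈ (0,1/2)` and `α = ρ²/(1 − 2b(1−ρ²))`;
then `α < 1`, and there exists `C > 0` such that for all `w ∈ ℝ`,
`E[exp(b(ρw + √(1−ρ²)ξ)²)(1 + |(1−ρ)w + √(1−ρ²)ξ|)] ≤ C (1 + |w|) exp(b α w²)`
(where `ξ` is a standard Gaussian); in particular the expectation is finite. -/
theorem post_jump_exp_moment (ρ b : ℝ) (hρ : ρ ∈ Set.Ioo (-1 : ℝ) 1)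
    (hb : b ∈ Set.Ioo (0 : ℝ) (1 / 2)) :
    ρ ^ 2 / (1 - 2 * b * (1 - ρ ^ 2)) < 1
      ∧ ∃ C : ℝ, 0 < C ∧ ∀ w : ℝ,
          Integrable (fun ξ : ℝ =>
              Real.exp (b * (ρ * w + Real.sqrt (1 - ρ ^ 2) * ξ) ^ 2)
                * (1 + |(1 - ρ) * w + Real.sqrt (1 - ρ ^ 2) * ξ|)) (gaussianReal 0 1)
          ∧ ∫ ξ : ℝ, Real.exp (b * (ρ * w + Real.sqrt (1 - ρ ^ 2) * ξ) ^ 2)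
                * (1 + |(1 - ρ) * w + Real.sqrt (1 - ρ ^ 2) * ξ|) ∂(gaussianReal 0 1)
              ≤ C * (1 + |w|)
                  * Real.exp (b * (ρ ^ 2 / (1 - 2 * b * (1 - ρ ^ 2))) * w ^ 2) := by
  obtain ⟨hρ₁, hρ₂⟩ := hρ
  obtain ⟨hb₀, hb₁⟩ := hb
  have hρ_sq : 0 < 1 - ρ ^ 2 := by nlinarith
  set s := √(1 - ρ ^ 2)
  set a := 1 - 2 * b * (1 - ρ ^ 2)
  have ha : 0 < a := by nlinarith
  have hab : 1 - 2 * b * s ^ 2 = a := by rw [sq_sqrt hρ_sq.le]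
  set c := (1 - ρ) + 2 * b * ρ * s ^ 2 / a
  set X := √(π / (a / 2))
  set J := ∫ u, |u| * exp (-(a / 2) * u ^ 2)
  have hX : 0 < X := sqrt_pos.2 (by positivity)
  have hJ : 0 ≤ J := integral_nonneg fun u => by positivity
  refine ⟨(div_lt_one ha).2 (by nlinarith), (√(2 * π))⁻¹ * ((1 + |c|) * X + |s| * J),
    by positivity, fun w => ⟨integrable_tilted_gaussianReal ha hab w, ?_⟩⟩
  calc _ ≤ (√(2 * π))⁻¹ * exp (b * (ρ ^ 2 / a) * w ^ 2) * ((1 + |c * w|) * X + |s| * J) :=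
        integral_tilted_gaussianReal_le ha hab w
    _ ≤ (√(2 * π))⁻¹ * exp (b * (ρ ^ 2 / a) * w ^ 2)
          * (((1 + |c|) * X + |s| * J) * (1 + |w|)) := by
        gcongr
        rw [abs_mul]
        nlinarith [abs_nonneg c, abs_nonneg w, mul_nonneg (abs_nonneg s) hJ]
    _ = _ := by ring
end
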